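/- arXiv:1808.08481 — 5 statements merged into one kernel-verified Lean document; each statement's English description precedes it below -/
import Mathlib

section
/- Define b_{2n,k} by the recurrence 2n·b_{2n,k} = [k(k+1)+2n-2]b_{2n-2,k} + [2+2(k-1)(4n-4k-3)]b_{2n-2,k-1} + 8(n-k+1)(2n-2k+1)b_{2n-2,k-2} for n ≥ 2 and k ≥ 1, with b_{2n,k} = 0 if k < 1 or k > n, and b_{2,1} = 1. Then b_{2n,k} ≥ 0 for all n ≥ 9 and k ≥ 1. -/
set_option maxHeartbeats 1000000

private lemma gammaJ_aux_pos {c t : ℚ} (hc : 0 < c) (h : 0 ≤ c * t) : 0 ≤ t := by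
  by_contra ht
  push_neg at ht
  nlinarith

/-- The gamma-coefficients of the fixed-point-free involution Eulerian polynomial:
`b n k` denotes `b_{2n,k}`, defined by the Guo–Zeng recurrence.
Then `b_{2n,k} ≥ 0` for all `n ≥ 9`, `k ≥ 1`. -/
theorem gammaJ_nonneg (b : ℕ → ℤ → ℚ)
    (hzero : ∀ (n : ℕ) (k : ℤ), (k < 1 ∨ k > (n : ℤ)) → b n k = 0)
    (h1 : b 1 1 = 1)
    (hrec : ∀ (n : ℕ), 2 ≤ n → ∀ k : ℤ, 1 ≤ k →
      2 * (n : ℚ) * b n k =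
        ((k : ℚ) * ((k : ℚ) + 1) + 2 * (n : ℚ) - 2) * b (n - 1) k
        + (2 + 2 * ((k : ℚ) - 1) * (4 * (n : ℚ) - 4 * (k : ℚ) - 3)) * b (n - 1) (k - 1)
        + 8 * ((n : ℚ) - (k : ℚ) + 1) * (2 * (n : ℚ) - 2 * (k : ℚ) + 1)
            * b (n - 1) (k - 2)) :
    ∀ (n : ℕ), 9 ≤ n → ∀ k : ℤ, 1 ≤ k → 0 ≤ b n k := by
  have key : ∀ n : ℕ, 9 ≤ n →
      (∀ k : ℤ, 0 ≤ b n k) ∧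
      (6*(n:ℚ)-2) * b n (n:ℤ) ≤ 8 * b n ((n:ℤ)-1) ∧
      ((n:ℚ)+1) * b n ((n:ℤ)-1) ≤ 12 * b n ((n:ℤ)-2) := by
    intro n hn
    induction n, hn using Nat.le_induction with
    | base =>
      have v2_1 : b 2 1 = 1 := by
        have h := hrec 2 (by norm_num) 1 (by norm_num)
        norm_num at h
        linarith [hzero 1 (-1) (by norm_num), hzero 1 (0) (by norm_num), h1, h]
      have v2_2 : b 2 2 = -1 := by
        have h := hrec 2 (by norm_num) 2 (by norm_num)
        norm_num at h
        linarith [hzero 1 (0) (by norm_num), hzero 1 2 (by norm_num), h1, h]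
      have v3_1 : b 3 1 = 1 := by
        have h := hrec 3 (by norm_num) 1 (by norm_num)
        norm_num at h
        linarith [hzero 2 (-1) (by norm_num), hzero 2 (0) (by norm_num), v2_1, h]
      have v3_2 : b 3 2 = -1 := by
        have h := hrec 3 (by norm_num) 2 (by norm_num)
        norm_num at h
        linarith [hzero 2 (0) (by norm_num), v2_2, v2_1, h]
      have v3_3 : b 3 3 = 3 := by
        have h := hrec 3 (by norm_num) 3 (by norm_num)
        norm_num at h
        linarith [hzero 2 3 (by norm_num), v2_2, v2_1, h]
      have v4_1 : b 4 1 = 1 := by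
        have h := hrec 4 (by norm_num) 1 (by norm_num)
        norm_num at h
        linarith [hzero 3 (-1) (by norm_num), hzero 3 (0) (by norm_num), v3_1, h]
      have v4_2 : b 4 2 = 0 := by
        have h := hrec 4 (by norm_num) 2 (by norm_num)
        norm_num at h
        linarith [hzero 3 (0) (by norm_num), v3_2, v3_1, h]
      have v4_3 : b 4 3 = 12 := by
        have h := hrec 4 (by norm_num) 3 (by norm_num)
        norm_num at h
        linarith [v3_3, v3_2, v3_1, h]
      have v4_4 : b 4 4 = -7 := by
        have h := hrec 4 (by norm_num) 4 (by norm_num)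
        norm_num at h
        linarith [hzero 3 4 (by norm_num), v3_3, v3_2, h]
      have v5_1 : b 5 1 = 1 := by
        have h := hrec 5 (by norm_num) 1 (by norm_num)
        norm_num at h
        linarith [hzero 4 (-1) (by norm_num), hzero 4 (0) (by norm_num), v4_1, h]
      have v5_2 : b 5 2 = 2 := by
        have h := hrec 5 (by norm_num) 2 (by norm_num)
        norm_num at h
        linarith [hzero 4 (0) (by norm_num), v4_2, v4_1, h]
      have v5_3 : b 5 3 = 36 := by
        have h := hrec 5 (by norm_num) 3 (by norm_num)
        norm_num at h
        linarith [v4_3, v4_2, v4_1, h]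
      have v5_4 : b 5 4 = -10 := by
        have h := hrec 5 (by norm_num) 4 (by norm_num)
        norm_num at h
        linarith [v4_4, v4_3, v4_2, h]
      have v5_5 : b 5 5 = 25 := by
        have h := hrec 5 (by norm_num) 5 (by norm_num)
        norm_num at h
        linarith [hzero 4 5 (by norm_num), v4_4, v4_3, h]
      have v6_1 : b 6 1 = 1 := by
        have h := hrec 6 (by norm_num) 1 (by norm_num)
        norm_num at h
        linarith [hzero 5 (-1) (by norm_num), hzero 5 (0) (by norm_num), v5_1, h]
      have v6_2 : b 6 2 = 5 := by
        have h := hrec 6 (by norm_num) 2 (by norm_num)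
        norm_num at h
        linarith [hzero 5 (0) (by norm_num), v5_2, v5_1, h]
      have v6_3 : b 6 3 = 91 := by
        have h := hrec 6 (by norm_num) 3 (by norm_num)
        norm_num at h
        linarith [v5_3, v5_2, v5_1, h]
      have v6_4 : b 6 4 = 91 := by
        have h := hrec 6 (by norm_num) 4 (by norm_num)
        norm_num at h
        linarith [v5_4, v5_3, v5_2, h]
      have v6_5 : b 6 5 = 219 := by
        have h := hrec 6 (by norm_num) 5 (by norm_num)
        norm_num at h
        linarith [v5_5, v5_4, v5_3, h]
      have v6_6 : b 6 6 = -65 := by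
        have h := hrec 6 (by norm_num) 6 (by norm_num)
        norm_num at h
        linarith [hzero 5 6 (by norm_num), v5_5, v5_4, h]
      have v7_1 : b 7 1 = 1 := by
        have h := hrec 7 (by norm_num) 1 (by norm_num)
        norm_num at h
        linarith [hzero 6 (-1) (by norm_num), hzero 6 (0) (by norm_num), v6_1, h]
      have v7_2 : b 7 2 = 9 := by
        have h := hrec 7 (by norm_num) 2 (by norm_num)
        norm_num at h
        linarith [hzero 6 (0) (by norm_num), v6_2, v6_1, h]
      have v7_3 : b 7 3 = 201 := by
        have h := hrec 7 (by norm_num) 3 (by norm_num)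
        norm_num at h
        linarith [v6_3, v6_2, v6_1, h]
      have v7_4 : b 7 4 = 652 := by
        have h := hrec 7 (by norm_num) 4 (by norm_num)
        norm_num at h
        linarith [v6_4, v6_3, v6_2, h]
      have v7_5 : b 7 5 = 1710 := by
        have h := hrec 7 (by norm_num) 5 (by norm_num)
        norm_num at h
        linarith [v6_5, v6_4, v6_3, h]
      have v7_6 : b 7 6 = 249 := by
        have h := hrec 7 (by norm_num) 6 (by norm_num)
        norm_num at h
        linarith [v6_6, v6_5, v6_4, h]
      have v7_7 : b 7 7 = 283 := by
        have h := hrec 7 (by norm_num) 7 (by norm_num)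
        norm_num at h
        linarith [hzero 6 7 (by norm_num), v6_6, v6_5, h]
      have v8_1 : b 8 1 = 1 := by
        have h := hrec 8 (by norm_num) 1 (by norm_num)
        norm_num at h
        linarith [hzero 7 (-1) (by norm_num), hzero 7 (0) (by norm_num), v7_1, h]
      have v8_2 : b 8 2 = 14 := by
        have h := hrec 8 (by norm_num) 2 (by norm_num)
        norm_num at h
        linarith [hzero 7 (0) (by norm_num), v7_2, v7_1, h]
      have v8_3 : b 8 3 = 399 := by
        have h := hrec 8 (by norm_num) 3 (by norm_num)
        norm_num at h
        linarith [v7_3, v7_2, v7_1, h]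
      have v8_4 : b 8 4 = 2593 := by
        have h := hrec 8 (by norm_num) 4 (by norm_num)
        norm_num at h
        linarith [v7_4, v7_3, v7_2, h]
      have v8_5 : b 8 5 = 10532 := by
        have h := hrec 8 (by norm_num) 5 (by norm_num)
        norm_num at h
        linarith [v7_5, v7_4, v7_3, h]
      have v8_6 : b 8 6 = 11319 := by
        have h := hrec 8 (by norm_num) 6 (by norm_num)
        norm_num at h
        linarith [v7_6, v7_5, v7_4, h]
      have v8_7 : b 8 7 = 6586 := by
        have h := hrec 8 (by norm_num) 7 (by norm_num)
        norm_num at h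
        linarith [v7_7, v7_6, v7_5, h]
      have v8_8 : b 8 8 = -583 := by
        have h := hrec 8 (by norm_num) 8 (by norm_num)
        norm_num at h
        linarith [hzero 7 8 (by norm_num), v7_7, v7_6, h]
      have v9_1 : b 9 1 = 1 := by
        have h := hrec 9 (by norm_num) 1 (by norm_num)
        norm_num at h
        linarith [hzero 8 (-1) (by norm_num), hzero 8 (0) (by norm_num), v8_1, h]
      have v9_2 : b 9 2 = 20 := by
        have h := hrec 9 (by norm_num) 2 (by norm_num)
        norm_num at h
        linarith [hzero 8 (0) (by norm_num), v8_2, v8_1, h]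
      have v9_3 : b 9 3 = 728 := by
        have h := hrec 9 (by norm_num) 3 (by norm_num)
        norm_num at h
        linarith [v8_3, v8_2, v8_1, h]
      have v9_4 : b 9 4 = 7902 := by
        have h := hrec 9 (by norm_num) 4 (by norm_num)
        norm_num at h
        linarith [v8_4, v8_3, v8_2, h]
      have v9_5 : b 9 5 = 50165 := by
        have h := hrec 9 (by norm_num) 5 (by norm_num)
        norm_num at h
        linarith [v8_5, v8_4, v8_3, h]
      have v9_6 : b 9 6 = 122571 := by
        have h := hrec 9 (by norm_num) 6 (by norm_num)
        norm_num at h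
        linarith [v8_6, v8_5, v8_4, h]
      have v9_7 : b 9 7 = 135545 := by
        have h := hrec 9 (by norm_num) 7 (by norm_num)
        norm_num at h
        linarith [v8_7, v8_6, v8_5, h]
      have v9_8 : b 9 8 = 33188 := by
        have h := hrec 9 (by norm_num) 8 (by norm_num)
        norm_num at h
        linarith [v8_8, v8_7, v8_6, h]
      have v9_9 : b 9 9 = 4417 := by
        have h := hrec 9 (by norm_num) 9 (by norm_num)
        norm_num at h
        linarith [hzero 8 9 (by norm_num), v8_8, v8_7, h]
      refine ⟨?_, ?_, ?_⟩
      · intro k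
        rcases lt_or_ge k 1 with hk | hk
        · rw [hzero 9 k (Or.inl hk)]
        rcases le_or_gt k 9 with hk9 | hk9
        · interval_cases k <;> norm_num [v9_1, v9_2, v9_3, v9_4, v9_5, v9_6, v9_7, v9_8, v9_9]
        · rw [hzero 9 k (Or.inr (by exact_mod_cast hk9))]
      · norm_num [v9_8, v9_9]
      · norm_num [v9_7, v9_8]
    | succ n hn ih =>
      obtain ⟨ih0, ih1, ih2⟩ := ih
      have hn9 : (9:ℚ) ≤ (n:ℚ) := by exact_mod_cast hn
      have e1 : (n:ℤ) + 1 - 1 = (n:ℤ) := by ring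
      have e2 : (n:ℤ) + 1 - 2 = (n:ℤ) - 1 := by ring
      have e3 : (n:ℤ) - 1 - 1 = (n:ℤ) - 2 := by ring
      have e4 : (n:ℤ) - 1 - 2 = (n:ℤ) - 3 := by ring
      have h1' := hrec (n+1) (by omega) ((n:ℤ)+1) (by omega)
      simp only [Nat.add_sub_cancel] at h1'
      rw [hzero n ((n:ℤ)+1) (Or.inr (by omega)), e1, e2] at h1'
      push_cast at h1'
      have h2' := hrec (n+1) (by omega) ((n:ℤ)) (by omega)
      simp only [Nat.add_sub_cancel] at h2'
      push_cast at h2'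
      have h3' := hrec (n+1) (by omega) ((n:ℤ)-1) (by omega)
      simp only [Nat.add_sub_cancel] at h3'
      rw [e3, e4] at h3'
      push_cast at h3'
      refine ⟨?_, ?_, ?_⟩
      · intro k
        rcases lt_or_ge k 1 with hk | hk
        · rw [hzero (n+1) k (Or.inl hk)]
        rcases le_or_gt k (n:ℤ) with hkn | hkn
        · have h := hrec (n+1) (by omega) k hk
          simp only [Nat.add_sub_cancel] at h
          push_cast at h
          have hk1 : (1:ℚ) ≤ (k:ℚ) := by exact_mod_cast hk
          have hkn' : (k:ℚ) ≤ (n:ℚ) := by exact_mod_cast hkn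
          have ha := ih0 k
          have hb := ih0 (k-1)
          have hc := ih0 (k-2)
          have hc1 : (0:ℚ) ≤ (k:ℚ)*((k:ℚ)+1)+2*((n:ℚ)+1)-2 := by nlinarith
          have hc2 : (0:ℚ) ≤ 2+2*((k:ℚ)-1)*(4*((n:ℚ)+1)-4*(k:ℚ)-3) := by
            nlinarith [mul_nonneg (by linarith : (0:ℚ) ≤ (k:ℚ)-1)
              (by linarith : (0:ℚ) ≤ 4*((n:ℚ)+1)-4*(k:ℚ)-3)]
          have hc3 : (0:ℚ) ≤ 8*((n:ℚ)+1-(k:ℚ)+1)*(2*((n:ℚ)+1)-2*(k:ℚ)+1) := by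
            nlinarith [mul_nonneg (by linarith : (0:ℚ) ≤ (n:ℚ)+1-(k:ℚ)+1)
              (by linarith : (0:ℚ) ≤ 2*((n:ℚ)+1)-2*(k:ℚ)+1)]
          have hsum : (0:ℚ) ≤ 2*((n:ℚ)+1) * b (n+1) k := by
            nlinarith [h, mul_nonneg hc1 ha, mul_nonneg hc2 hb, mul_nonneg hc3 hc]
          exact gammaJ_aux_pos (by positivity) hsum
        · rcases (by omega : k = (n:ℤ)+1 ∨ (n:ℤ)+1 < k) with heq | hlt
          · subst heq
            have hx := ih0 (n:ℤ)
            have hsum : (0:ℚ) ≤ 2*((n:ℚ)+1) * b (n+1) ((n:ℤ)+1) := by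
              nlinarith [h1', ih1, hx]
            exact gammaJ_aux_pos (by positivity) hsum
          · rw [hzero (n+1) k (Or.inr (by omega))]
      · push_cast
        rw [e1]
        have hx := ih0 (n:ℤ)
        have hT : 2*((n:ℚ)+1)*(8*b (n+1) ((n:ℤ)) - (6*(n:ℚ)+4)*b (n+1) ((n:ℤ)+1)) =
            (44*(n:ℚ)^2+36*(n:ℚ)-8)*b n ((n:ℤ)) - (32*(n:ℚ)+32)*b n ((n:ℤ)-1)
              + 384*b n ((n:ℤ)-2) := by
          linear_combination 8*h2' - (6*(n:ℚ)+4)*h1'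
        have hRHS : (0:ℚ) ≤ (44*(n:ℚ)^2+36*(n:ℚ)-8)*b n ((n:ℤ)) - (32*(n:ℚ)+32)*b n ((n:ℤ)-1)
              + 384*b n ((n:ℤ)-2) := by
          nlinarith [ih2, mul_nonneg (by nlinarith : (0:ℚ) ≤ 44*(n:ℚ)^2+36*(n:ℚ)-8) hx]
        have h0 : (0:ℚ) ≤ 2*((n:ℚ)+1)*(8*b (n+1) ((n:ℤ)) - (6*(n:ℚ)+4)*b (n+1) ((n:ℤ)+1)) := by
          rw [hT]; exact hRHS
        have h5 := gammaJ_aux_pos (show (0:ℚ) < 2*((n:ℚ)+1) by positivity) h0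
        linarith
      · push_cast
        rw [e1, e2]
        have hT3 : 2*((n:ℚ)+1)*(12*b (n+1) ((n:ℤ)-1) - ((n:ℚ)+2)*b (n+1) ((n:ℤ))) =
            (10*(n:ℚ)^2+8*(n:ℚ))*b n ((n:ℤ)-1) + (72*(n:ℚ)-312)*b n ((n:ℤ)-2)
              + 1440*b n ((n:ℤ)-3) - ((n:ℚ)^3+5*(n:ℚ)^2+6*(n:ℚ))*b n ((n:ℤ)) := by
          linear_combination 12*h3' - ((n:ℚ)+2)*h2'
        have hRHS3 : (0:ℚ) ≤ (10*(n:ℚ)^2+8*(n:ℚ))*b n ((n:ℤ)-1) + (72*(n:ℚ)-312)*b n ((n:ℤ)-2)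
              + 1440*b n ((n:ℤ)-3) - ((n:ℚ)^3+5*(n:ℚ)^2+6*(n:ℚ))*b n ((n:ℤ)) := by
          nlinarith [mul_nonneg (by nlinarith : (0:ℚ) ≤ 10*(n:ℚ)^2+8*(n:ℚ))
              (by linarith [ih1] : (0:ℚ) ≤ 8*b n ((n:ℤ)-1) - (6*(n:ℚ)-2)*b n ((n:ℤ))),
            mul_nonneg (by nlinarith [hn9, sq_nonneg ((n:ℚ)-9)] :
              (0:ℚ) ≤ 52*(n:ℚ)^3-12*(n:ℚ)^2-64*(n:ℚ)) (ih0 ((n:ℤ))),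
            mul_nonneg (by linarith : (0:ℚ) ≤ 72*(n:ℚ)-312) (ih0 ((n:ℤ)-2)),
            ih0 ((n:ℤ)-3)]
        have h0 : (0:ℚ) ≤ 2*((n:ℚ)+1)*(12*b (n+1) ((n:ℤ)-1) - ((n:ℚ)+2)*b (n+1) ((n:ℤ))) := by
          rw [hT3]; exact hRHS3
        have h5 := gammaJ_aux_pos (show (0:ℚ) < 2*((n:ℚ)+1) by positivity) h0
        linarith
  intro n hn k hk
  exact (key n hn).1 k
end

section
/- Define b_{2n,k} by the recurrence 2n·b_{2n,k} = [k(k+1)+2n-2]b_{2n-2,k} + [2+2(k-1)(4n-4k-3)]b_{2n-2,k-1} + 8(n-k+1)(2n-2k+1)b_{2n-2,k-2}, with b_{2n,k} = 0 if k < 1 or k > n and b_{2,1} = 1. Then b_{2n,n} ≥ b_{2n-2,n-1} for all n ≥ 11. -/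
/-!
Write `d m`, `s m`, `t m` for the last three entries `b m m`, `b m (m-1)`, `b m (m-2)` of row `m`.
At `k = m + 1` the recurrence reads `2(m+1)(d (m+1) - d m) = 8 (s m - m d m)`, so it suffices
to show `m d m ≤ s m`. For `m ≥ 8` this inequality propagates from row `m` to row `m + 1`
together with `(3m+4) s m ≤ 24 t m` and the nonnegativity of the whole row: off the diagonal
the recurrence has nonnegative coefficients, and on it `d (m+1) ≥ d m`. Row 10, where all
three hold, is computed directly.
-/

def VanishesOffTriangle (b : ℕ → ℤ → ℚ) : Prop :=
  ∀ (n : ℕ) (k : ℤ), (k < 1 ∨ k > (n : ℤ)) → b n k = 0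

/-- `b n k` stands for `b_{2n,k}`. -/
def GuoZengRec (b : ℕ → ℤ → ℚ) : Prop :=
  ∀ (n : ℕ), 2 ≤ n → ∀ k : ℤ, 1 ≤ k →
      2 * (n : ℚ) * b n k =
        ((k : ℚ) * ((k : ℚ) + 1) + 2 * (n : ℚ) - 2) * b (n - 1) k
        + (2 + 2 * ((k : ℚ) - 1) * (4 * (n : ℚ) - 4 * (k : ℚ) - 3)) * b (n - 1) (k - 1)
        + 8 * ((n : ℚ) - (k : ℚ) + 1) * (2 * (n : ℚ) - 2 * (k : ℚ) + 1)
            * b (n - 1) (k - 2)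

structure RowBounds (b : ℕ → ℤ → ℚ) (m : ℕ) : Prop where
  nonneg : ∀ k, 0 ≤ b m k
  mul_diag_le : (m : ℚ) * b m m ≤ b m (m - 1)
  mul_subdiag_le : (3 * (m : ℚ) + 4) * b m (m - 1) ≤ 24 * b m (m - 2)

variable {b : ℕ → ℤ → ℚ}

theorem VanishesOffTriangle.nonneg_of_nonneg_on_row (hzero : VanishesOffTriangle b) {n : ℕ}
    (h : ∀ k : ℤ, 1 ≤ k → k ≤ n → 0 ≤ b n k) (k : ℤ) : 0 ≤ b n k := by
  by_cases hk : 1 ≤ k ∧ k ≤ n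
  · exact h k hk.1 hk.2
  · rw [hzero n k (by omega)]

namespace GuoZengRec

theorem succ (hrec : GuoZengRec b) {m : ℕ} (hm : 1 ≤ m) {k : ℤ} (hk : 1 ≤ k) :
    2 * ((m : ℚ) + 1) * b (m + 1) k =
      ((k : ℚ) * (k + 1) + 2 * m) * b m k
      + (2 + 2 * ((k : ℚ) - 1) * (4 * m - 4 * k + 1)) * b m (k - 1)
      + 8 * ((m : ℚ) - k + 2) * (2 * m - 2 * k + 3) * b m (k - 2) := by
  have := hrec (m + 1) (by omega) k hk
  push_cast at this
  linear_combination this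

theorem eq_div (hrec : GuoZengRec b) {m : ℕ} (hm : 1 ≤ m) {k : ℤ} (hk : 1 ≤ k) :
    b (m + 1) k =
      (((k : ℚ) * (k + 1) + 2 * m) * b m k
      + (2 + 2 * ((k : ℚ) - 1) * (4 * m - 4 * k + 1)) * b m (k - 1)
      + 8 * ((m : ℚ) - k + 2) * (2 * m - 2 * k + 3) * b m (k - 2)) / (2 * ((m : ℚ) + 1)) := by
  rw [← hrec.succ hm hk]
  field_simp

theorem diag_succ (hzero : VanishesOffTriangle b) (hrec : GuoZengRec b) {m : ℕ} (hm : 1 ≤ m) :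
    2 * ((m : ℚ) + 1) * b (m + 1) (m + 1) = (2 - 6 * m) * b m m + 8 * b m (m - 1) := by
  have := hrec.succ hm (k := m + 1) (by omega)
  rw [hzero m (m + 1) (by omega), add_sub_cancel_right,
    show (m : ℤ) + 1 - 2 = m - 1 by ring] at this
  push_cast at this
  linear_combination this

theorem subdiag_succ (hrec : GuoZengRec b) {m : ℕ} (hm : 1 ≤ m) :
    2 * ((m : ℚ) + 1) * b (m + 1) m =
      ((m : ℚ) ^ 2 + 3 * m) * b m m + 2 * m * b m (m - 1) + 48 * b m (m - 2) := by
  have := hrec.succ hm (k := m) (by omega)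
  linear_combination this

theorem subsubdiag_succ (hrec : GuoZengRec b) {m : ℕ} (hm : 2 ≤ m) :
    2 * ((m : ℚ) + 1) * b (m + 1) (m - 1) =
      ((m : ℚ) ^ 2 + m) * b m (m - 1) + (10 * m - 18) * b m (m - 2) + 120 * b m (m - 3) := by
  have := hrec.succ (m := m) (by omega) (k := m - 1) (by omega)
  rw [show (m : ℤ) - 1 - 1 = m - 2 by ring, show (m : ℤ) - 1 - 2 = m - 3 by ring] at this
  push_cast at this
  linear_combination this

theorem diag_le_diag_succ (hzero : VanishesOffTriangle b) (hrec : GuoZengRec b) {m : ℕ}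
    (hm : 1 ≤ m) (h : (m : ℚ) * b m m ≤ b m (m - 1)) : b m m ≤ b (m + 1) (m + 1) := by
  have hpos : (0 : ℚ) < 2 * (m + 1) := by positivity
  refine le_of_mul_le_mul_left ?_ hpos
  linear_combination 8 * h - hrec.diag_succ hzero hm

theorem nonneg_succ (hrec : GuoZengRec b) {m : ℕ} (hm : 1 ≤ m) {k : ℤ} (hk : 1 ≤ k)
    (hkm : k ≤ m) (h₀ : 0 ≤ b m k) (h₁ : 0 ≤ b m (k - 1)) (h₂ : 0 ≤ b m (k - 2)) :
    0 ≤ b (m + 1) k := by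
  have hk' : (1 : ℚ) ≤ k := by exact_mod_cast hk
  have hkm' : (k : ℚ) ≤ m := by exact_mod_cast hkm
  have c₀ : (0 : ℚ) ≤ k * (k + 1) + 2 * m := by positivity
  have c₁ : (0 : ℚ) ≤ 2 + 2 * (k - 1) * (4 * m - 4 * k + 1) := by
    nlinarith [mul_nonneg (sub_nonneg.2 hk') (sub_nonneg.2 hkm')]
  have c₂ : (0 : ℚ) ≤ 8 * (m - k + 2) * (2 * m - 2 * k + 3) := by
    nlinarith [mul_nonneg (sub_nonneg.2 hkm') (sub_nonneg.2 hkm')]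
  rw [hrec.eq_div hm hk]
  exact div_nonneg
    (add_nonneg (add_nonneg (mul_nonneg c₀ h₀) (mul_nonneg c₁ h₁)) (mul_nonneg c₂ h₂))
    (by positivity)

theorem row_nonneg_succ (hzero : VanishesOffTriangle b) (hrec : GuoZengRec b) {m : ℕ}
    (hm : 1 ≤ m) (hrow : ∀ k, 0 ≤ b m k) (hdiag : 0 ≤ b (m + 1) (m + 1)) :
    ∀ k, 0 ≤ b (m + 1) k := by
  refine hzero.nonneg_of_nonneg_on_row fun k hk hkm => ?_
  rcases hkm.lt_or_eq with hkm | hkm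
  · exact hrec.nonneg_succ hm hk (by omega) (hrow _) (hrow _) (hrow _)
  · rw [hkm]
    exact_mod_cast hdiag

end GuoZengRec

namespace RowBounds

theorem succ (hzero : VanishesOffTriangle b) (hrec : GuoZengRec b) {m : ℕ} (hm : 8 ≤ m)
    (h : RowBounds b m) : RowBounds b (m + 1) := by
  have hM : (8 : ℚ) ≤ m := by exact_mod_cast hm
  have hpos : (0 : ℚ) < 2 * (m + 1) := by positivity
  have hd := hrec.diag_succ hzero (m := m) (by omega)
  have hs := hrec.subdiag_succ (m := m) (by omega)
  have ht := hrec.subsubdiag_succ (m := m) (by omega)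
  have hdiag := hrec.diag_le_diag_succ hzero (by omega) h.mul_diag_le
  refine ⟨hrec.row_nonneg_succ hzero (by omega) h.nonneg ((h.nonneg _).trans hdiag), ?_, ?_⟩
  · push_cast
    rw [add_sub_cancel_right]
    refine le_of_mul_le_mul_left ?_ hpos
    -- after clearing `2(m+1)`, the gap is `(7m²+7m-2) d + 2 (24 t - (3m+4) s)`
    have hd₀ : 0 ≤ (7 * (m : ℚ) ^ 2 + 7 * m - 2) * b m m :=
      mul_nonneg (by nlinarith) (h.nonneg _)
    linear_combination (↑m + 1) * hd - hs + 2 * h.mul_subdiag_le + hd₀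
  · push_cast
    rw [add_sub_cancel_right, show (m : ℤ) + 1 - 2 = m - 1 by ring]
    refine le_of_mul_le_mul_left ?_ hpos
    -- after clearing `2(m+1)`, the gap is
    -- `(18m²+10m)(s - m d) + (15m³-6m²-21m) d + (96m-768) t + 2880 b m (m-3)`
    have hs₀ := mul_le_mul_of_nonneg_left h.mul_diag_le
      (by positivity : (0 : ℚ) ≤ 18 * (m : ℚ) ^ 2 + 10 * m)
    have hd₀ : 0 ≤ (15 * (m : ℚ) ^ 3 - 6 * m ^ 2 - 21 * m) * b m m :=
      mul_nonneg (by nlinarith) (h.nonneg _)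
    have ht₀ : 0 ≤ (96 * (m : ℚ) - 768) * b m (m - 2) :=
      mul_nonneg (by linarith) (h.nonneg _)
    linear_combination
      (3 * (m : ℚ) + 7) * hs - 24 * ht + hs₀ + hd₀ + ht₀ + 2880 * h.nonneg (m - 3)

end RowBounds

theorem rowBounds_ten (hzero : VanishesOffTriangle b) (h1 : b 1 1 = 1) (hrec : GuoZengRec b) :
    RowBounds b 10 := by
  refine ⟨hzero.nonneg_of_nonneg_on_row fun k hk hk' => ?_, ?_, ?_⟩
  · push_cast at hk'
    interval_cases k <;> norm_num [hrec.eq_div, hzero _ _, h1]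
  all_goals norm_num [hrec.eq_div, hzero _ _, h1]

/-- The gamma-coefficients of the fixed-point-free involution Eulerian polynomial:
`b n k` denotes `b_{2n,k}`, defined by the Guo–Zeng recurrence.
Then `b_{2n,n} ≥ b_{2n-2,n-1}` for all `n ≥ 11`. -/
theorem gammaJ_diag_mono (b : ℕ → ℤ → ℚ)
    (hzero : ∀ (n : ℕ) (k : ℤ), (k < 1 ∨ k > (n : ℤ)) → b n k = 0)
    (h1 : b 1 1 = 1)
    (hrec : ∀ (n : ℕ), 2 ≤ n → ∀ k : ℤ, 1 ≤ k →
      2 * (n : ℚ) * b n k =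
        ((k : ℚ) * ((k : ℚ) + 1) + 2 * (n : ℚ) - 2) * b (n - 1) k
        + (2 + 2 * ((k : ℚ) - 1) * (4 * (n : ℚ) - 4 * (k : ℚ) - 3)) * b (n - 1) (k - 1)
        + 8 * ((n : ℚ) - (k : ℚ) + 1) * (2 * (n : ℚ) - 2 * (k : ℚ) + 1)
            * b (n - 1) (k - 2)) :
    ∀ (n : ℕ), 11 ≤ n → b n (n : ℤ) ≥ b (n - 1) ((n : ℤ) - 1) := by
  have bounds : ∀ m, 10 ≤ m → RowBounds b m :=
    Nat.le_induction (rowBounds_ten hzero h1 hrec) fun m hm h => h.succ hzero hrec (by omega)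
  intro n hn
  obtain ⟨m, rfl⟩ : ∃ m, n = m + 1 := ⟨n - 1, by omega⟩
  have := GuoZengRec.diag_le_diag_succ hzero hrec (by omega) (bounds m (by omega)).mul_diag_le
  simpa using this
end

section
/- If a polynomial p(t) with real coefficients is palindromic of center n/2 (its nonzero coefficients range over degrees r to s with r+s = n and coefficient of t^{r+i} equals coefficient of t^{s-i}), then there exist unique real numbers γ_r, γ_{r+1}, ..., γ_{⌊n/2⌋} such that p(t) = Σ_{k=r}^{⌊n/2⌋} γ_k t^k (1+t)^{n−2k}. -/
open Polynomial

noncomputable def gam (p : Polynomial ℝ) (r n : ℕ) : ℕ → ℝ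
  | k =>
    if k < r ∨ n / 2 < k then 0
    else p.coeff k - ∑ j ∈ (Finset.Ico r k).attach,
      gam p r n j * ((n - 2 * (j : ℕ)).choose (k - j))
  decreasing_by exact (Finset.mem_Ico.mp j.2).2

lemma gam_eq (p : Polynomial ℝ) (r n k : ℕ) :
    gam p r n k = if k < r ∨ n / 2 < k then 0
    else p.coeff k - ∑ j ∈ Finset.Ico r k,
      gam p r n j * ((n - 2 * j).choose (k - j)) := by
  rw [gam, ← Finset.sum_attach (Finset.Ico r k)
    (fun j => gam p r n j * ((n - 2 * j).choose (k - j)))]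

lemma coeff_term (a : ℝ) (k d i : ℕ) :
    (C a * X ^ k * (1 + X) ^ d).coeff i
      = a * (if k ≤ i then (d.choose (i - k) : ℝ) else 0) := by
  rw [mul_right_comm, coeff_mul_X_pow']
  split
  · rw [coeff_C_mul, coeff_one_add_X_pow]
  · simp

/-- A palindromic real polynomial of center `n/2` (nonzero coefficients between
degrees `r` and `s` with `r + s = n`, and `coeff (r+i) = coeff (s-i)`) has a
unique gamma-expansion `p = ∑_{k=r}^{⌊n/2⌋} γ_k t^k (1+t)^{n-2k}`. -/
theorem gamma_expansion_exists_unique (p : Polynomial ℝ) (hp : p ≠ 0)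
    (r s n : ℕ) (hr : r = p.natTrailingDegree) (hs : s = p.natDegree)
    (hn : n = r + s)
    (hpal : ∀ i : ℕ, i ≤ n / 2 - r → p.coeff (r + i) = p.coeff (s - i)) :
    ∃! γ : ℕ → ℝ,
      (∀ k : ℕ, k < r ∨ n / 2 < k → γ k = 0) ∧
      p = ∑ k ∈ Finset.Icc r (n / 2), C (γ k) * X ^ k * (1 + X) ^ (n - 2 * k) := by
  have hrs : r ≤ s := hr ▸ hs ▸ p.natTrailingDegree_le_natDegree
  -- coefficient of the generic sum
  have hsum : ∀ (g : ℕ → ℝ) (i : ℕ),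
      (∑ k ∈ Finset.Icc r (n / 2), C (g k) * X ^ k * (1 + X) ^ (n - 2 * k)).coeff i
        = ∑ k ∈ Finset.Icc r (n / 2),
            g k * (if k ≤ i then ((n - 2 * k).choose (i - k) : ℝ) else 0) := by
    intro g i
    rw [finset_sum_coeff]
    exact Finset.sum_congr rfl fun k _ => coeff_term _ _ _ _
  -- splitting the generic sum at a middle index
  have hmid : ∀ (g : ℕ → ℝ) (i : ℕ), r ≤ i → i ≤ n / 2 →
      ∑ k ∈ Finset.Icc r (n / 2),
          g k * (if k ≤ i then ((n - 2 * k).choose (i - k) : ℝ) else 0)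
        = (∑ j ∈ Finset.Ico r i, g j * ((n - 2 * j).choose (i - j))) + g i := by
    intro g i hri hi
    rw [← Finset.sum_subset (Finset.Icc_subset_Icc_right hi)
      (fun k hk hk' => by
        simp only [Finset.mem_Icc] at hk hk'
        rw [if_neg (by omega), mul_zero])]
    rw [← Finset.Ico_add_one_right_eq_Icc, Finset.sum_Ico_succ_top (by omega)]
    congr 1
    · refine Finset.sum_congr rfl fun j hj => ?_
      rw [if_pos (by exact le_of_lt (Finset.mem_Ico.mp hj).2)]
    · simp
  -- symmetry of coefficients of p
  have hcsym : ∀ j, j ≤ n / 2 → p.coeff (n - j) = p.coeff j := by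
    intro j hj
    rcases lt_or_ge j r with h | h
    · rw [coeff_eq_zero_of_natDegree_lt (show p.natDegree < n - j by omega),
        coeff_eq_zero_of_lt_natTrailingDegree (show j < p.natTrailingDegree by omega)]
    · have := hpal (j - r) (by omega)
      have h1 : r + (j - r) = j := by omega
      have h2 : s - (j - r) = n - j := by omega
      rw [h1, h2] at this
      exact this.symm
  set γ := gam p r n with hγ
  -- the sum with γ agrees with p on coefficients up to n/2
  have hSlow : ∀ i, i ≤ n / 2 →
      ∑ k ∈ Finset.Icc r (n / 2),
          γ k * (if k ≤ i then ((n - 2 * k).choose (i - k) : ℝ) else 0)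
        = p.coeff i := by
    intro i hi
    rcases lt_or_ge i r with h | h
    · rw [coeff_eq_zero_of_lt_natTrailingDegree (by omega)]
      refine Finset.sum_eq_zero fun k hk => ?_
      simp only [Finset.mem_Icc] at hk
      rw [if_neg (by omega), mul_zero]
    · rw [hmid γ i h hi, hγ, gam_eq p r n i, if_neg (by omega)]
      ring
  have hex : p = ∑ k ∈ Finset.Icc r (n / 2), C (γ k) * X ^ k * (1 + X) ^ (n - 2 * k) := by
    ext i
    rw [hsum]
    rcases le_or_gt i (n / 2) with hi | hi
    · exact (hSlow i hi).symm
    rcases le_or_gt i n with hin | hin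
    · -- use symmetry
      have h1 : p.coeff i = p.coeff (n - i) := by
        have := hcsym (n - i) (by omega)
        rwa [show n - (n - i) = i by omega] at this
      rw [h1, ← hSlow (n - i) (by omega)]
      refine Finset.sum_congr rfl fun k hk => ?_
      simp only [Finset.mem_Icc] at hk
      congr 1
      rcases le_or_gt k (n - i) with h2 | h2
      · rw [if_pos (show k ≤ i by omega), if_pos h2]
        have h3 : n - i - k ≤ n - 2 * k := by omega
        have h4 : n - 2 * k - (n - i - k) = i - k := by omega
        rw [← Nat.choose_symm h3, h4]
      · rw [if_pos (show k ≤ i by omega), if_neg (show ¬ k ≤ n - i by omega),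
          Nat.choose_eq_zero_of_lt (show n - 2 * k < i - k by omega), Nat.cast_zero]
    · rw [coeff_eq_zero_of_natDegree_lt (by omega)]
      refine (Finset.sum_eq_zero fun k hk => ?_).symm
      simp only [Finset.mem_Icc] at hk
      rw [if_pos (show k ≤ i by omega),
        Nat.choose_eq_zero_of_lt (show n - 2 * k < i - k by omega), Nat.cast_zero, mul_zero]
  refine ⟨γ, ⟨fun k hk => by rw [hγ, gam_eq, if_pos hk], hex⟩, ?_⟩
  rintro γ' ⟨h0, heq⟩
  funext k
  induction k using Nat.strong_induction_on with
  | _ k ih =>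
    by_cases h : k < r ∨ n / 2 < k
    · rw [h0 k h, hγ, gam_eq, if_pos h]
    · push_neg at h
      have hc : p.coeff k
          = (∑ j ∈ Finset.Ico r k, γ' j * ((n - 2 * j).choose (k - j))) + γ' k := by
        conv_lhs => rw [heq]
        rw [hsum, hmid γ' k (by omega) (by omega)]
      have hios : ∀ j ∈ Finset.Ico r k, γ' j * ((n - 2 * j).choose (k - j) : ℝ)
          = γ j * ((n - 2 * j).choose (k - j)) := fun j hj => by
        rw [ih j (Finset.mem_Ico.mp hj).2]
      rw [hγ, gam_eq, if_neg (by omega), ← Finset.sum_congr rfl hios]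
      have := hc
      linarith [hc]
end

section
/- Every (3412,3421)-avoiding permutation π of [n] (n ≥ 2) can be uniquely written either as π₁n with π₁ a (3412,3421)-avoiding permutation of [n−1], or as π₁ ∗ π₂ where π₁ ∈ S_k(3412,3421), π₂ ∈ S_{n−k}(3412,3421), 1 ≤ k ≤ n−1, and π₁ ∗ π₂ = A n B with A = π₁(1)···π₁(k−1) and B obtained from π₂ shifted up by k−1 with its letter (k−1)+1 replaced by π₁(k). -/
/-- Two lists of naturals are order-isomorphic: same length, and corresponding
entries compare the same way. -/
def OrderIsoList (u v : List ℕ) : Prop :=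
  u.length = v.length ∧
    ∀ i j : ℕ, i < u.length → j < u.length →
      (u.getD i 0 < u.getD j 0 ↔ v.getD i 0 < v.getD j 0)

/-- The list `l` contains the pattern `p`: some subsequence of `l` is
order-isomorphic to `p`. -/
def ContainsL (l p : List ℕ) : Prop :=
  ∃ u : List ℕ, u.Sublist l ∧ OrderIsoList u p

/-- The list `l` avoids the pattern `p`. -/
def AvoidsL (l p : List ℕ) : Prop := ¬ ContainsL l p

/-- The `∗` operation of the paper: for `π₁ ∈ S_k`, `π₂ ∈ S_{n-k}` (as lists, one-based),
`π₁ ∗ π₂ = A n B` where `A = π₁(1)⋯π₁(k-1)` and `B` is `π₂` shifted up by `k-1`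
with its entry `1` replaced by `π₁(k)`. -/
def starPerm (l₁ l₂ : List ℕ) : List ℕ :=
  l₁.dropLast ++ [l₁.length + l₂.length] ++
    l₂.map (fun m => if m = 1 then l₁.getLastD 0 else m + (l₁.length - 1))

/-!
Write `π = P n Q`. If `Q` is empty, `π = π₁ n`. Otherwise let `k = |P| + 1`. Were some entry
`a` of `P` larger than `k`, then at most `k - 2` of the `k` values `≤ k` would lie in `P`, so two
of them, `b` and `c`, would follow `n`, and `a n b c` would be an occurrence of `3412` or `3421`.
Hence `P ⊆ [k]` and exactly one entry `m` of `Q` is `≤ k`; then `π₁ = P m`, and `π₂` is `Q` with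
`m` replaced by `1` and every other entry lowered by `k - 1`. Conversely the position of `n`
determines `k` and all of `π₁` but its last entry, which is the value of `[k]` missing from `P`.
-/

open List

theorem List.perm_range'_iff {L : List ℕ} {s N : ℕ} :
    L ~ range' s N ↔ L.Nodup ∧ L.length = N ∧ ∀ x ∈ L, s ≤ x ∧ x < s + N := by
  refine ⟨fun h => ⟨h.nodup_iff.mpr nodup_range', by simp [h.length_eq],
    fun x hx => mem_range'_1.mp (h.subset hx)⟩, fun ⟨hnd, hlen, hmem⟩ => ?_⟩
  exact (subperm_of_subset hnd fun x hx => mem_range'_1.mpr (hmem x hx)).perm_of_length_le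
    (by simp [hlen])

theorem List.countP_range'_one_le {k n : ℕ} (hk : k ≤ n) : (range' 1 n).countP (· ≤ k) = k := by
  obtain ⟨d, rfl⟩ := Nat.exists_eq_add_of_le hk
  have hlow : ∀ x ∈ range' 1 k, x ≤ k := fun x hx => by
    have := mem_range'_1.mp hx
    omega
  have hhigh : ∀ x ∈ range' (1 + k) d, ¬x ≤ k := fun x hx => by
    have := mem_range'_1.mp hx
    omega
  rw [← range'_append_1, countP_append, countP_eq_length.mpr (by simpa using hlow),
    countP_eq_zero.mpr (by simpa using hhigh), length_range', add_zero]

theorem List.perm_range'_of_append_singleton {n : ℕ} {P : List ℕ} (hn : 1 ≤ n)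
    (h : P ++ [n] ~ range' 1 n) : P ~ range' 1 (n - 1) := by
  obtain ⟨m, rfl⟩ := Nat.exists_eq_add_of_le' hn
  rw [range'_concat, one_mul, add_comm 1 m] at h
  rw [Nat.add_sub_cancel]
  exact (perm_append_right_iff [m + 1]).mp h

theorem List.append_cons_inj_of_notMem_of_notMem {α : Type*} [DecidableEq α] {a : α}
    {P Q P' Q' : List α} (h : P ++ a :: Q = P' ++ a :: Q') (hP : a ∉ P) (hP' : a ∉ P') :
    P = P' ∧ Q = Q' := by
  have hlen : P.length = P'.length := by
    simpa [idxOf_append_of_notMem, hP, hP'] using congrArg (idxOf a) h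
  obtain ⟨rfl, hQ⟩ := append_inj h hlen
  exact ⟨rfl, (cons.inj hQ).2⟩

theorem List.Perm.eq_of_dropLast_eq {α : Type*} {l l' : List α} (hp : l ~ l')
    (hd : l.dropLast = l'.dropLast) : l = l' := by
  rcases eq_nil_or_concat l with rfl | ⟨L, a, rfl⟩
  · exact hp.nil_eq
  rcases eq_nil_or_concat l' with rfl | ⟨L', b, rfl⟩
  · exact hp.eq_nil
  simp only [concat_eq_append, dropLast_concat] at hp hd
  subst hd
  rw [singleton_perm_singleton.mp ((perm_append_left_iff L).mp hp)]

theorem OrderIsoList.symm {u v : List ℕ} (h : OrderIsoList u v) : OrderIsoList v u :=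
  ⟨h.1.symm, fun i j hi hj => (h.2 i j (h.1 ▸ hi) (h.1 ▸ hj)).symm⟩

theorem OrderIsoList.trans {u v w : List ℕ} (h₁ : OrderIsoList u v) (h₂ : OrderIsoList v w) :
    OrderIsoList u w :=
  ⟨h₁.1.trans h₂.1, fun i j hi hj => (h₁.2 i j hi hj).trans (h₂.2 i j (h₁.1 ▸ hi) (h₁.1 ▸ hj))⟩

theorem orderIsoList_map {v : List ℕ} {f : ℕ → ℕ} (hf : ∀ a ∈ v, ∀ b ∈ v, f a < f b ↔ a < b) :
    OrderIsoList (v.map f) v := by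
  refine ⟨length_map _, fun i j hi hj => ?_⟩
  rw [length_map] at hi hj
  simp only [getD_eq_getElem?_getD, getElem?_map, getElem?_eq_getElem hi, getElem?_eq_getElem hj,
    Option.map_some, Option.getD_some]
  exact hf _ (getElem_mem hi) _ (getElem_mem hj)

theorem orderIsoList_3412 {a b c d : ℕ} (h₁ : c < d) (h₂ : d < a) (h₃ : a < b) :
    OrderIsoList [a, b, c, d] [3, 4, 1, 2] := by
  refine ⟨rfl, fun i j hi hj => ?_⟩
  simp only [length_cons, length_nil] at hi hj
  interval_cases i <;> interval_cases j <;> simp <;> omega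

theorem orderIsoList_3421 {a b c d : ℕ} (h₁ : d < c) (h₂ : c < a) (h₃ : a < b) :
    OrderIsoList [a, b, c, d] [3, 4, 2, 1] := by
  refine ⟨rfl, fun i j hi hj => ?_⟩
  simp only [length_cons, length_nil] at hi hj
  interval_cases i <;> interval_cases j <;> simp <;> omega

theorem AvoidsL.sublist {l s p : List ℕ} (h : AvoidsL l p) (hs : s <+ l) : AvoidsL s p :=
  fun ⟨u, hu, hiso⟩ => h ⟨u, hu.trans hs, hiso⟩

theorem AvoidsL.map {l p : List ℕ} {f : ℕ → ℕ} (hf : ∀ a ∈ l, ∀ b ∈ l, f a < f b ↔ a < b)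
    (h : AvoidsL l p) : AvoidsL (l.map f) p := by
  rintro ⟨u, hu, hiso⟩
  obtain ⟨v, hv, rfl⟩ := sublist_map_iff.mp hu
  have hv' : OrderIsoList (v.map f) v :=
    orderIsoList_map fun a ha b hb => hf a (hv.subset ha) b (hv.subset hb)
  exact h ⟨v, hv, hv'.symm.trans hiso⟩

theorem eq_of_sublist_of_avoids {l : List ℕ} (h₁ : AvoidsL l [3, 4, 1, 2])
    (h₂ : AvoidsL l [3, 4, 2, 1]) {a x b c : ℕ} (hs : [a, x, b, c] <+ l) (hb : b < a) (hc : c < a)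
    (hx : a < x) : b = c := by
  rcases lt_trichotomy b c with hbc | hbc | hbc
  · exact absurd ⟨_, hs, orderIsoList_3412 hbc hc hx⟩ h₁
  · exact hbc
  · exact absurd ⟨_, hs, orderIsoList_3421 hbc hb hx⟩ h₂

theorem countP_lt_le_one_of_avoids {P Q : List ℕ} {x a : ℕ} (hQ : Q.Nodup)
    (h₁ : AvoidsL (P ++ x :: Q) [3, 4, 1, 2]) (h₂ : AvoidsL (P ++ x :: Q) [3, 4, 2, 1])
    (ha : a ∈ P) (hax : a < x) : Q.countP (· < a) ≤ 1 := by
  by_contra! h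
  obtain ⟨b, c, t, hbct⟩ : ∃ b c t, Q.filter (· < a) = b :: c :: t := by
    rw [countP_eq_length_filter] at h
    rcases hf : Q.filter (· < a) with _ | ⟨b, _ | ⟨c, t⟩⟩ <;> simp_all
  have hsmall : ∀ y ∈ b :: c :: t, y < a := fun y hy => by
    simpa using (mem_filter.mp (hbct ▸ hy : y ∈ Q.filter (· < a))).2
  have hbc : b ∉ c :: t := (nodup_cons.mp (hbct ▸ hQ.filter _)).1
  have hs : [a, x, b, c] <+ P ++ x :: Q := by
    have hbcQ : [b, c] <+ Q :=
      (((nil_sublist t).cons_cons c).cons_cons b).trans (hbct ▸ filter_sublist)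
    exact (singleton_sublist.mpr ha).append (hbcQ.cons_cons x)
  exact hbc (eq_of_sublist_of_avoids h₁ h₂ hs (hsmall b (by simp)) (hsmall c (by simp)) hax ▸
    mem_cons_self)

/-- The relabelling `B = starShift π₁(k) k ∘ π₂` in `π₁ ∗ π₂ = A n B`. -/
def starShift (c k m : ℕ) : ℕ := if m = 1 then c else m + (k - 1)

def starUnshift (k x : ℕ) : ℕ := if x ≤ k then 1 else x - (k - 1)

theorem starUnshift_starShift {c k m : ℕ} (hc : c ≤ k) (hm : 1 ≤ m) :
    starUnshift k (starShift c k m) = m := by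
  unfold starUnshift starShift
  split_ifs <;> omega

theorem starShift_starUnshift {c k x : ℕ} (hk : 1 ≤ k) (hx : x ≤ k → x = c) :
    starShift c k (starUnshift k x) = x := by
  unfold starUnshift starShift
  split_ifs <;> omega

theorem starUnshift_lt_starUnshift_iff {k x y : ℕ} (hk : 1 ≤ k) (h : x ≤ k → y ≤ k → x = y) :
    starUnshift k x < starUnshift k y ↔ x < y := by
  unfold starUnshift
  split_ifs <;> omega

theorem starPerm_eq (l₁ l₂ : List ℕ) :
    starPerm l₁ l₂ =
      l₁.dropLast ++ (l₁.length + l₂.length) :: l₂.map (starShift (l₁.getLastD 0) l₁.length) := by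
  simp [starPerm, starShift]

theorem starPerm_eq_of_perm {n k : ℕ} {l₁ l₂ : List ℕ} (hkn : k ≤ n) (h₁ : l₁ ~ range' 1 k)
    (h₂ : l₂ ~ range' 1 (n - k)) :
    starPerm l₁ l₂ = l₁.dropLast ++ n :: l₂.map (starShift (l₁.getLastD 0) k) := by
  rw [starPerm_eq, h₁.length_eq, h₂.length_eq, length_range', length_range',
    Nat.add_sub_cancel' hkn]

theorem notMem_dropLast_of_perm {n k : ℕ} {l₁ : List ℕ} (hkn : k < n) (h₁ : l₁ ~ range' 1 k) :
    n ∉ l₁.dropLast := fun hn => by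
  have := mem_range'_1.mp (h₁.subset (dropLast_sublist l₁ |>.subset hn))
  omega

theorem starPerm_injective {n k k' : ℕ} {l₁ l₂ l₁' l₂' : List ℕ} (hk : 1 ≤ k) (hkn : k < n)
    (hk' : 1 ≤ k') (hk'n : k' < n) (h₁ : l₁ ~ range' 1 k) (h₂ : l₂ ~ range' 1 (n - k))
    (h₁' : l₁' ~ range' 1 k') (h₂' : l₂' ~ range' 1 (n - k'))
    (h : starPerm l₁ l₂ = starPerm l₁' l₂') : k = k' ∧ l₁ = l₁' ∧ l₂ = l₂' := by
  rw [starPerm_eq_of_perm hkn.le h₁ h₂, starPerm_eq_of_perm hk'n.le h₁' h₂'] at h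
  obtain ⟨hA, hB⟩ := append_cons_inj_of_notMem_of_notMem h (notMem_dropLast_of_perm hkn h₁)
    (notMem_dropLast_of_perm hk'n h₁')
  obtain rfl : k = k' := by
    have := congrArg length hA
    simp only [length_dropLast, h₁.length_eq, h₁'.length_eq, length_range'] at this
    omega
  obtain rfl : l₁ = l₁' := (h₁.trans h₁'.symm).eq_of_dropLast_eq hA
  have hc : l₁.getLastD 0 ≤ k := by
    rcases mem_cons.mp (getLastD_mem_cons (l := l₁) (a := 0)) with h0 | hmem
    · omega
    · have := mem_range'_1.mp (h₁.subset hmem)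
      omega
  have hunshift : ∀ L : List ℕ, L ~ range' 1 (n - k) →
      (L.map (starShift (l₁.getLastD 0) k)).map (starUnshift k) = L := fun L hL => by
    rw [map_map]
    refine (map_congr_left fun m hm => ?_).trans (map_id L)
    exact starUnshift_starShift hc (mem_range'_1.mp (hL.subset hm)).1
  exact ⟨rfl, rfl, by rw [← hunshift l₂ h₂, hB, hunshift l₂' h₂']⟩

theorem starPerm_ne_append_singleton {n k : ℕ} {l₁ l₂ l : List ℕ} (hkn : k < n)
    (h₁ : l₁ ~ range' 1 k) (h₂ : l₂ ~ range' 1 (n - k)) (hl : n ∉ l) :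
    starPerm l₁ l₂ ≠ l ++ [n] := fun h => by
  rw [starPerm_eq_of_perm hkn.le h₁ h₂] at h
  obtain ⟨-, hB⟩ := append_cons_inj_of_notMem_of_notMem h (notMem_dropLast_of_perm hkn h₁) hl
  have := h₂.length_eq
  simp only [map_eq_nil_iff.mp hB, length_nil, length_range'] at this
  omega

theorem forall_le_and_exists_filter_eq_singleton {n : ℕ} {P Q : List ℕ} (hQ : Q ≠ [])
    (hl : P ++ n :: Q ~ range' 1 n) (h₁ : AvoidsL (P ++ n :: Q) [3, 4, 1, 2])
    (h₂ : AvoidsL (P ++ n :: Q) [3, 4, 2, 1]) :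
    (∀ x ∈ P, x ≤ P.length + 1) ∧ ∃ m, Q.filter (· ≤ P.length + 1) = [m] := by
  set k := P.length + 1
  obtain ⟨hnd, hlen, hmem⟩ := perm_range'_iff.mp hl
  obtain ⟨-, hnQ, hdisj⟩ := nodup_append.mp hnd
  have hkn : k < n := by
    simp only [length_append, length_cons] at hlen
    have := length_pos_iff.mpr hQ
    omega
  have hcount : P.countP (· ≤ k) + Q.countP (· ≤ k) = k := by
    have := hl.countP_eq (· ≤ k)
    rwa [countP_range'_one_le hkn.le, countP_append,
      countP_cons_of_neg (by simpa using hkn)] at this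
  have hP : ∀ x ∈ P, x ≤ k := by
    by_contra! ⟨a, ha, hka⟩
    have han : a < n := by
      have := (hmem a (by simp [ha])).2
      have := hdisj a ha n mem_cons_self
      omega
    have hQa : Q.countP (· ≤ k) ≤ 1 :=
      (countP_mono_left fun x _ hx => by simp only [decide_eq_true_eq] at hx ⊢; omega).trans
        (countP_lt_le_one_of_avoids (nodup_cons.mp hnQ).2 h₁ h₂ ha han)
    have hPa : P.countP (· ≤ k) < P.length := countP_lt_length_iff.mpr ⟨a, ha, by simpa using hka⟩
    omega
  refine ⟨hP, length_eq_one_iff.mp ?_⟩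
  have := countP_eq_length.mpr fun x hx => decide_eq_true (hP x hx)
  rw [← countP_eq_length_filter]
  omega

theorem perm_range'_map_starUnshift {n k : ℕ} {Q : List ℕ} (hk : 1 ≤ k) (hQ : Q.Nodup)
    (hlen : Q.length = n - k) (hmem : ∀ x ∈ Q, 1 ≤ x ∧ x < n)
    (hsmall : ∀ x ∈ Q, ∀ y ∈ Q, x ≤ k → y ≤ k → x = y) :
    Q.map (starUnshift k) ~ range' 1 (n - k) := by
  refine perm_range'_iff.mpr ⟨hQ.map_on fun x hx y hy hxy => ?_, by rw [length_map, hlen], ?_⟩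
  · by_contra hne
    rcases Nat.lt_or_gt_of_ne hne with hlt | hlt
    · exact ((starUnshift_lt_starUnshift_iff hk (hsmall x hx y hy)).mpr hlt).ne hxy
    · exact ((starUnshift_lt_starUnshift_iff hk (hsmall y hy x hx)).mpr hlt).ne hxy.symm
  · simp only [mem_map, forall_exists_index, and_imp]
    rintro _ x hx rfl
    have := hmem x hx
    have := length_pos_of_mem hx
    unfold starUnshift
    split_ifs <;> omega

theorem starPerm_append_singleton_map_starUnshift {P Q : List ℕ} {m : ℕ}
    (hsmall : ∀ x ∈ Q, x ≤ P.length + 1 → x = m) :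
    starPerm (P ++ [m]) (Q.map (starUnshift (P.length + 1))) =
      P ++ (P.length + 1 + Q.length) :: Q := by
  have hQ : Q.map (starShift m (P.length + 1) ∘ starUnshift (P.length + 1)) = Q :=
    (map_congr_left fun x hx => starShift_starUnshift (by omega) (hsmall x hx)).trans (map_id Q)
  rw [starPerm_eq, dropLast_concat, getLastD_concat, map_map, length_append, length_singleton,
    length_map, hQ]

theorem exists_starPerm_eq {n : ℕ} {P Q : List ℕ} (hQ : Q ≠ []) (hl : P ++ n :: Q ~ range' 1 n)
    (h₁ : AvoidsL (P ++ n :: Q) [3, 4, 1, 2]) (h₂ : AvoidsL (P ++ n :: Q) [3, 4, 2, 1]) :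
    ∃ l₁ l₂, l₁ ~ range' 1 (P.length + 1) ∧ l₂ ~ range' 1 (n - (P.length + 1)) ∧
      AvoidsL l₁ [3, 4, 1, 2] ∧ AvoidsL l₁ [3, 4, 2, 1] ∧
      AvoidsL l₂ [3, 4, 1, 2] ∧ AvoidsL l₂ [3, 4, 2, 1] ∧ P ++ n :: Q = starPerm l₁ l₂ := by
  obtain ⟨hP, m, hm⟩ := forall_le_and_exists_filter_eq_singleton hQ hl h₁ h₂
  obtain ⟨hnd, hlen, hmem⟩ := perm_range'_iff.mp hl
  simp only [length_append, length_cons] at hlen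
  have hmQ : m ∈ Q ∧ m ≤ P.length + 1 := by
    have := mem_filter.mp (hm ▸ mem_singleton_self m)
    exact ⟨this.1, of_decide_eq_true this.2⟩
  have hsmall : ∀ x ∈ Q, x ≤ P.length + 1 → x = m := fun x hx hxk =>
    mem_singleton.mp (hm ▸ mem_filter.mpr ⟨hx, by simpa using hxk⟩)
  have hQn : ∀ x ∈ Q, 1 ≤ x ∧ x < n := fun x hx => by
    have hx1 := hmem x (by simp [hx])
    have hnQ := (nodup_cons.mp (nodup_append.mp hnd).2.1).1
    exact ⟨hx1.1, lt_of_le_of_ne (by omega) (ne_of_mem_of_not_mem hx hnQ)⟩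
  have hl₁ : P ++ [m] <+ P ++ n :: Q := ((singleton_sublist.mpr hmQ.1).cons n).append_left P
  have hQl : Q <+ P ++ n :: Q := (sublist_cons_self n Q).trans (sublist_append_right P _)
  have hpair : ∀ x ∈ Q, ∀ y ∈ Q, x ≤ P.length + 1 → y ≤ P.length + 1 → x = y :=
    fun x hx y hy hxk hyk => (hsmall x hx hxk).trans (hsmall y hy hyk).symm
  have hmono : ∀ x ∈ Q, ∀ y ∈ Q,
      starUnshift (P.length + 1) x < starUnshift (P.length + 1) y ↔ x < y :=
    fun x hx y hy => starUnshift_lt_starUnshift_iff (by omega) (hpair x hx y hy)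
  refine ⟨P ++ [m], Q.map (starUnshift (P.length + 1)), ?_, ?_, h₁.sublist hl₁, h₂.sublist hl₁,
    (h₁.sublist hQl).map hmono, (h₂.sublist hQl).map hmono, ?_⟩
  · refine perm_range'_iff.mpr ⟨hnd.sublist hl₁, by simp, fun x hx => ?_⟩
    rcases mem_append.mp hx with hxP | hxm
    · exact ⟨(hmem x (by simp [hxP])).1, by have := hP x hxP; omega⟩
    · obtain rfl := mem_singleton.mp hxm
      exact ⟨(hQn x hmQ.1).1, by omega⟩
  · exact perm_range'_map_starUnshift (by omega) (hnd.sublist hQl) (by omega) hQn hpair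
  · rw [starPerm_append_singleton_map_starUnshift hsmall, show P.length + 1 + Q.length = n by omega]

/-- Every `(3412,3421)`-avoiding permutation of `[n]` (`n ≥ 2`, written as a list,
one-based) can be uniquely written either as `π₁ n` with `π₁` a
`(3412,3421)`-avoiding permutation of `[n-1]`, or as `π₁ ∗ π₂` with
`π₁ ∈ S_k(3412,3421)`, `π₂ ∈ S_{n-k}(3412,3421)`, `1 ≤ k ≤ n-1`. -/
theorem star_decomposition (n : ℕ) (hn : 2 ≤ n) (l : List ℕ)
    (hl : l.Perm (List.range' 1 n))
    (ha1 : AvoidsL l [3, 4, 1, 2]) (ha2 : AvoidsL l [3, 4, 2, 1]) :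
    ∃! d : List ℕ ⊕ ℕ × List ℕ × List ℕ,
      match d with
      | .inl l₁ =>
          l₁.Perm (List.range' 1 (n - 1)) ∧
          AvoidsL l₁ [3, 4, 1, 2] ∧ AvoidsL l₁ [3, 4, 2, 1] ∧
          l = l₁ ++ [n]
      | .inr (k, l₁, l₂) =>
          1 ≤ k ∧ k ≤ n - 1 ∧
          l₁.Perm (List.range' 1 k) ∧ l₂.Perm (List.range' 1 (n - k)) ∧
          AvoidsL l₁ [3, 4, 1, 2] ∧ AvoidsL l₁ [3, 4, 2, 1] ∧
          AvoidsL l₂ [3, 4, 1, 2] ∧ AvoidsL l₂ [3, 4, 2, 1] ∧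
          l = starPerm l₁ l₂ := by
  have hnotMem : ∀ {L : List ℕ}, L ~ range' 1 (n - 1) → n ∉ L := fun hL hnL => by
    have := mem_range'_1.mp (hL.subset hnL)
    omega
  refine existsUnique_of_exists_of_unique ?_ ?_
  · have hnl : n ∈ l := hl.mem_iff.mpr (mem_range'_1.mpr ⟨by omega, by omega⟩)
    obtain ⟨P, Q, rfl⟩ := append_of_mem hnl
    rcases eq_or_ne Q [] with rfl | hQ
    · exact ⟨.inl P, perm_range'_of_append_singleton (by omega) hl,
        ha1.sublist (sublist_append_left P [n]), ha2.sublist (sublist_append_left P [n]), rfl⟩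
    · obtain ⟨l₁, l₂, h⟩ := exists_starPerm_eq hQ hl ha1 ha2
      have hlen := hl.length_eq
      simp only [length_append, length_cons, length_range'] at hlen
      have := length_pos_iff.mpr hQ
      exact ⟨.inr (P.length + 1, l₁, l₂), by omega, by omega, h⟩
  · rintro (l₁ | ⟨k, l₁, l₂⟩) (l₁' | ⟨k', l₁', l₂'⟩) h h'
    · obtain ⟨-, -, -, rfl⟩ := h
      exact congrArg Sum.inl (append_cancel_right h'.2.2.2)
    · obtain ⟨h₁, -, -, rfl⟩ := h
      obtain ⟨-, hk'n, h₁', h₂', -, -, -, -, heq⟩ := h'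
      exact absurd heq.symm (starPerm_ne_append_singleton (by omega) h₁' h₂' (hnotMem h₁))
    · obtain ⟨-, hkn, h₁, h₂, -, -, -, -, rfl⟩ := h
      obtain ⟨h₁', -, -, heq⟩ := h'
      exact absurd heq (starPerm_ne_append_singleton (by omega) h₁ h₂ (hnotMem h₁'))
    · obtain ⟨hk, hkn, h₁, h₂, -, -, -, -, rfl⟩ := h
      obtain ⟨hk', hk'n, h₁', h₂', -, -, -, -, heq⟩ := h'
      obtain ⟨rfl, rfl, rfl⟩ := starPerm_injective hk (by omega) hk' (by omega) h₁ h₂ h₁' h₂' heq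
      rfl
end

section
/- For every n ≥ 1, the Eulerian polynomial A_n(t) = Σ_{π ∈ S_n} t^{des(π)} satisfies A_n(t) = Σ_{k=0}^{⌊(n−1)/2⌋} γ_{n,k} t^k (1+t)^{n−1−2k}, where γ_{n,k} is the number of permutations π ∈ S_n with no double descents (dd(π) = 0) and des(π) = k. -/
/-!
Valley hopping (Foata–Strehl). With `+∞` on both sides of a word, each letter is a valley, a
peak, a double descent or a double ascent. Moving a double descent `x` rightwards past the maximal
run of smaller letters that follows it makes `x` a double ascent, lowers `des` by one and leaves
the type of every other letter unchanged; moving `x` back is the inverse. Processing the letters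
one at a time, the sum of `t ^ des` over the words whose double descents avoid a set `A`, each
weighted by `(1 + t) ^ #(double ascents in A)`, does not depend on `A`. Taking `A` to be the whole
alphabet leaves only the words without double descents, and for these
`2 * des + #(double ascents) = n - 1`.
-/

open Classical Polynomial

/-- Number of descents of a permutation of `Fin n`. -/
noncomputable def desNum {n : ℕ} (π : Equiv.Perm (Fin n)) : ℕ :=
  (Finset.univ.filter (fun i : Fin n =>
    ∃ h : i.1 + 1 < n, π ⟨i.1 + 1, h⟩ < π i)).card

/-- Number of double descents, with boundary convention `π(0) = π(n+1) = ∞`. -/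
noncomputable def ddNum {n : ℕ} (π : Equiv.Perm (Fin n)) : ℕ :=
  (Finset.univ.filter (fun i : Fin n =>
    (i.1 = 0 ∨ ∃ h : i.1 - 1 < n, π i < π ⟨i.1 - 1, h⟩) ∧
    ∃ h : i.1 + 1 < n, π ⟨i.1 + 1, h⟩ < π i)).card

open scoped Finset

namespace ValleyHopping

/-- Abstract valley hopping: `hop x` maps the objects having `x` among their double descents
bijectively onto those having `x` among their double ascents, lowering `des` by one. -/
structure HopSystem (ι β : Type*) [DecidableEq ι] where
  objs : Finset β
  des : β → ℕ
  dd : β → Finset ι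
  da : β → Finset ι
  hop : ι → β → β
  unhop : ι → β → β
  hop_spec : ∀ x, ∀ w ∈ objs, x ∈ dd w → hop x w ∈ objs ∧ unhop x (hop x w) = w ∧
    des w = des (hop x w) + 1 ∧ dd (hop x w) = (dd w).erase x ∧ da (hop x w) = insert x (da w)
  unhop_spec : ∀ x, ∀ w ∈ objs, x ∈ da w →
    unhop x w ∈ objs ∧ hop x (unhop x w) = w ∧ x ∈ dd (unhop x w)

namespace HopSystem

variable {ι β R : Type*} [DecidableEq ι] [CommSemiring R] (H : HopSystem ι β)

lemma notMem_dd_of_mem_da {x : ι} {w : β} (hw : w ∈ H.objs) (hx : x ∈ H.da w) :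
    x ∉ H.dd w := by
  obtain ⟨hmem, hw', hdd⟩ := H.unhop_spec x w hw hx
  rw [← hw', (H.hop_spec x _ hmem hdd).2.2.2.1]
  exact Finset.notMem_erase x _

lemma sum_filter_mem_dd (t : R) {A : Finset ι} {x : ι} (hxA : x ∉ A) :
    ∑ w ∈ H.objs with Disjoint (H.dd w) A ∧ x ∈ H.dd w,
        t ^ H.des w * (1 + t) ^ #(H.da w ∩ A) =
      ∑ w ∈ H.objs with Disjoint (H.dd w) A ∧ x ∈ H.da w,
        t * (t ^ H.des w * (1 + t) ^ #(H.da w ∩ A)) := by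
  refine Finset.sum_nbij' (H.hop x) (H.unhop x) (fun w hw => ?_) (fun w hw => ?_)
    (fun w hw => ?_) (fun w hw => ?_) (fun w hw => ?_) <;>
    simp only [Finset.mem_filter] at hw ⊢ <;>
    obtain ⟨hW, hA, hx⟩ := hw
  · obtain ⟨hmem, -, -, hdd, hda⟩ := H.hop_spec x w hW hx
    exact ⟨hmem, hdd ▸ hA.mono_left (Finset.erase_subset _ _), by simp [hda]⟩
  · obtain ⟨hmem, hw', hdd⟩ := H.unhop_spec x w hW hx
    have hdd' := (H.hop_spec x _ hmem hdd).2.2.2.1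
    rw [hw'] at hdd'
    refine ⟨hmem, Finset.disjoint_left.mpr fun y hy hyA => Finset.disjoint_left.mp hA ?_ hyA, hdd⟩
    exact hdd' ▸ Finset.mem_erase.mpr ⟨ne_of_mem_of_not_mem hyA hxA, hy⟩
  · exact (H.hop_spec x w hW hx).2.1
  · exact (H.unhop_spec x w hW hx).2.1
  · obtain ⟨-, -, hdes, -, hda⟩ := H.hop_spec x w hW hx
    rw [hdes, hda, Finset.insert_inter_of_notMem hxA, pow_succ]
    ring

theorem sum_pow_des_eq (t : R) (A : Finset ι) :
    ∑ w ∈ H.objs, t ^ H.des w =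
      ∑ w ∈ H.objs with Disjoint (H.dd w) A, t ^ H.des w * (1 + t) ^ #(H.da w ∩ A) := by
  induction A using Finset.induction_on with
  | empty => simp
  | insert x A hxA ih =>
    set f : β → R := fun w => t ^ H.des w * (1 + t) ^ #(H.da w ∩ A)
    have hda : ∀ w ∈ H.objs, (Disjoint (H.dd w) A ∧ x ∉ H.dd w) ∧ x ∈ H.da w ↔
        Disjoint (H.dd w) A ∧ x ∈ H.da w := fun w hw =>
      ⟨fun h => ⟨h.1.1, h.2⟩, fun h => ⟨⟨h.1, H.notMem_dd_of_mem_da hw h.2⟩, h.2⟩⟩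
    calc ∑ w ∈ H.objs, t ^ H.des w
        = ∑ w ∈ H.objs with Disjoint (H.dd w) A ∧ x ∈ H.dd w, f w +
            ∑ w ∈ H.objs with Disjoint (H.dd w) A ∧ x ∉ H.dd w, f w := by
          rw [ih, ← Finset.sum_filter_add_sum_filter_not _ (x ∈ H.dd ·), Finset.filter_filter,
            Finset.filter_filter]
      _ = ∑ w ∈ H.objs with Disjoint (H.dd w) A ∧ x ∉ H.dd w,
            (f w + if x ∈ H.da w then t * f w else 0) := by
          rw [H.sum_filter_mem_dd t hxA, Finset.sum_add_distrib, ← Finset.sum_filter,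
            Finset.filter_filter, Finset.filter_congr hda, add_comm]
      _ = _ := by
          simp only [Finset.disjoint_insert_right, and_comm (a := x ∉ _)]
          refine Finset.sum_congr rfl fun w _ => ?_
          split_ifs with hx
          · rw [Finset.inter_insert_of_mem hx,
              Finset.card_insert_of_notMem fun h => hxA (Finset.mem_inter.mp h).2]
            simp only [f]
            ring
          · simp [f, Finset.inter_insert_of_notMem hx]

end HopSystem

lemma getLast?_cons_or {α : Type*} (c : α) (a : List α) (p : Option α) :
    (c :: a).getLast?.or p = a.getLast?.or (some c) := by
  cases a <;> simp [List.getLast?_cons]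

/-! ### Letter shapes -/

variable {α : Type*} [LinearOrder α]

-- `none` stands for the `+∞` beyond either end of a word.
def descIn (p : Option α) (x : α) : Bool := p.all (x < ·)

def descOut (x : α) (q : Option α) : Bool := q.any (· < x)

@[simp] lemma descIn_none (x : α) : descIn none x = true := rfl
@[simp] lemma descIn_some (q x : α) : descIn (some q) x = decide (x < q) := rfl
@[simp] lemma descOut_none (x : α) : descOut x none = false := rfl
@[simp] lemma descOut_some (x y : α) : descOut x (some y) = decide (y < x) := rfl

/-- Each letter `x` of the word with `(descent into x, descent out of x)`, the letter before the
word being `p`. -/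
def shapes : Option α → List α → List (α × Bool × Bool)
  | _, [] => []
  | p, x :: t => (x, descIn p x, descOut x t.head?) :: shapes (some x) t

@[simp] lemma shapes_nil (p : Option α) : shapes p [] = [] := rfl

@[simp] lemma shapes_cons (p : Option α) (x : α) (t : List α) :
    shapes p (x :: t) = (x, descIn p x, descOut x t.head?) :: shapes (some x) t := rfl

@[simp] lemma map_fst_shapes (p : Option α) (w : List α) : (shapes p w).map Prod.fst = w := by
  induction w generalizing p <;> simp [*]

lemma shapes_congr {p q : Option α} {w : List α} (h : ∀ y ∈ w.head?, descIn p y = descIn q y) :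
    shapes p w = shapes q w := by
  cases w with
  | nil => rfl
  | cons y t => simp [h y rfl]

lemma exists_of_mem_shapes {p : Option α} {w : List α} {x : α} {s : Bool × Bool}
    (h : (x, s) ∈ shapes p w) :
    ∃ a b, w = a ++ x :: b ∧ s = (descIn (a.getLast?.or p) x, descOut x b.head?) := by
  induction w generalizing p with
  | nil => simp at h
  | cons c t ih =>
    rcases List.mem_cons.mp h with h | h
    · obtain ⟨rfl, rfl⟩ := Prod.mk.inj h
      exact ⟨[], t, rfl, by simp⟩
    · obtain ⟨a, b, rfl, rfl⟩ := ih h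
      exact ⟨c :: a, b, rfl, by rw [getLast?_cons_or]⟩

lemma mem_of_mem_shapes {p : Option α} {w : List α} {x : α} {s : Bool × Bool}
    (h : (x, s) ∈ shapes p w) : x ∈ w :=
  map_fst_shapes p w ▸ List.mem_map_of_mem (f := Prod.fst) h

def des (w : List α) : ℕ := (shapes none w).countP (·.2.2)

def lettersOfShape (s : Bool × Bool) (w : List α) : Finset α :=
  (((shapes none w).filter (·.2 = s)).map Prod.fst).toFinset

abbrev doubleDescents (w : List α) : Finset α := lettersOfShape (true, true) w

abbrev doubleAscents (w : List α) : Finset α := lettersOfShape (false, false) w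

@[simp] lemma mem_lettersOfShape {s : Bool × Bool} {w : List α} {x : α} :
    x ∈ lettersOfShape s w ↔ (x, s) ∈ shapes none w := by
  simp [lettersOfShape]

lemma card_lettersOfShape {w : List α} (hw : w.Nodup) (s : Bool × Bool) :
    #(lettersOfShape s w) = (shapes none w).countP (·.2 = s) := by
  have hnd : (((shapes none w).filter (·.2 = s)).map Prod.fst).Nodup :=
    (List.filter_sublist.map Prod.fst).nodup (by rwa [map_fst_shapes])
  rw [lettersOfShape, List.toFinset_card_of_nodup hnd, List.length_map,
    List.countP_eq_length_filter]

lemma lettersOfShape_subset (s : Bool × Bool) (w : List α) : lettersOfShape s w ⊆ w.toFinset :=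
  fun _ hx => List.mem_toFinset.mpr (mem_of_mem_shapes (mem_lettersOfShape.mp hx))

-- Descents are the peaks and double descents, and valleys outnumber peaks by `(descIn p x).toNat`.
lemma two_mul_countP_shapes_cons (p : Option α) (x : α) (t : List α) :
    2 * (shapes p (x :: t)).countP (·.2.2) + (shapes p (x :: t)).countP (·.2 = (false, false)) +
      (descIn p x).toNat = t.length + 1 + (shapes p (x :: t)).countP (·.2 = (true, true)) := by
  induction t generalizing p x with
  | nil => cases h : descIn p x <;> simp [h]
  | cons y t ih =>
    have hy : descIn (some x) y = descOut x (y :: t).head? := rfl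
    have := ih (some x) y
    rw [shapes_cons p x, List.countP_cons, List.countP_cons, List.countP_cons, List.length_cons]
    rw [hy] at this
    generalize shapes (some x) (y :: t) = S at this ⊢
    simp only [List.head?_cons, descOut_some] at this ⊢
    cases descIn p x <;> by_cases hyx : y < x <;> simp [hyx] at this ⊢ <;> omega

lemma two_mul_des_add_card_doubleAscents {w : List α} (hw : w.Nodup)
    (hdd : doubleDescents w = ∅) : 2 * des w + #(doubleAscents w) = w.length - 1 := by
  cases w with
  | nil => simp [des, lettersOfShape]
  | cons x t =>
    have key := two_mul_countP_shapes_cons none x t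
    unfold doubleDescents at hdd
    unfold doubleAscents
    rw [← card_lettersOfShape hw, ← card_lettersOfShape hw, hdd] at key
    simp only [descIn_none, Bool.toNat_true, Finset.card_empty] at key
    rw [des, List.length_cons]
    omega

lemma descIn_of_lt {p : Option α} {x y : α} (hx : descIn p x = true) (hy : y < x) :
    descIn p y = true := by
  cases p <;> simp_all [hy.trans]

lemma descOut_eq_false_of_lt {q : Option α} {x y : α} (hx : descOut x q = false) (hy : y < x) :
    descOut y q = false := by
  cases q with
  | none => rfl
  | some z => simp_all [hy.le.trans]

lemma descOut_eq_false_of_descIn {q : Option α} {x : α} (h : descIn q x = true) :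
    descOut x q = false := by
  cases q <;> simp_all [lt_asymm]

lemma descIn_of_descOut_eq_false {q : Option α} {x : α} (h : descOut x q = false) (hx : x ∉ q) :
    descIn q x = true := by
  cases q with
  | none => rfl
  | some z => simp_all [lt_of_le_of_ne, Ne.symm]

lemma descOut_of_descIn_eq_false {q : Option α} {x : α} (h : descIn q x = false) (hx : x ∉ q) :
    descOut x q = true := by
  cases q with
  | none => simp at h
  | some z => simp_all [lt_of_le_of_ne]

lemma descOut_head?_dropWhile (x : α) (b : List α) :
    descOut x (b.dropWhile (· < x)).head? = false := by
  induction b with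
  | nil => rfl
  | cons z b ih => by_cases h : z < x <;> simp [h, ih]

/-! ### Hopping a double descent -/

/-- `w'` arises from `w` by moving its double descent `x` rightwards past the run `u` of smaller
letters that follows it. -/
def IsHop (x : α) (w w' : List α) : Prop :=
  ∃ a u v, w = a ++ x :: (u ++ v) ∧ w' = a ++ (u ++ x :: v) ∧ u ≠ [] ∧ (∀ y ∈ u, y < x) ∧
    descOut x v.head? = false ∧ descIn a.getLast? x = true

lemma shapes_append_cons_perm {x : α} {u v : List α} (hu : u ≠ []) (hux : ∀ y ∈ u, y < x)
    (hv : descOut x v.head? = false) {p q : Option α}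
    (hpq : ∀ y ∈ u.head?, descIn p y = descIn q y) :
    (shapes p (u ++ x :: v)).Perm ((x, false, false) :: shapes q (u ++ v)) := by
  induction u generalizing p q with
  | nil => exact absurd rfl hu
  | cons y u ih =>
    have hy : y < x := hux y (by simp)
    simp only [List.cons_append, shapes_cons, hpq y rfl]
    cases u with
    | nil =>
      have hxy : shapes (some x) v = shapes (some y) v := shapes_congr fun z hz => by
        rw [Option.mem_def.mp hz, descOut_some, decide_eq_false_iff_not, not_lt] at hv
        simp [not_lt.mpr hv, not_lt.mpr (hy.trans_le hv).le]
      simp only [List.nil_append, shapes_cons, List.head?_cons, descOut_some, descIn_some,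
        decide_eq_false (not_lt_of_gt hy), hv, hxy, descOut_eq_false_of_lt hv hy]
      exact List.Perm.swap _ _ _
    | cons z u =>
      exact ((ih (by simp) (fun w hw => hux w (by simp [hw])) fun _ _ => rfl).cons _).trans
        (List.Perm.swap _ _ _)

lemma exists_shapes_eq_and_perm {x : α} {u v : List α} (hu : u ≠ []) (hux : ∀ y ∈ u, y < x)
    (hv : descOut x v.head? = false) (a : List α) {p : Option α}
    (ha : descIn (a.getLast?.or p) x = true) :
    ∃ A B, shapes p (a ++ x :: (u ++ v)) = A ++ (x, true, true) :: B ∧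
      (shapes p (a ++ (u ++ x :: v))).Perm (A ++ (x, false, false) :: B) := by
  obtain ⟨y, u', rfl⟩ := List.exists_cons_of_ne_nil hu
  have hy : y < x := hux y (by simp)
  induction a generalizing p with
  | nil =>
    simp only [List.getLast?_nil, Option.none_or] at ha
    refine ⟨[], shapes (some x) (y :: u' ++ v), by simp [ha, hy], ?_⟩
    exact shapes_append_cons_perm hu hux hv (by simp [descIn_of_lt ha hy, hy])
  | cons c a ih =>
    rw [getLast?_cons_or] at ha
    obtain ⟨A, B, h₁, h₂⟩ := ih ha
    have hc : descOut c (a ++ x :: (y :: u' ++ v)).head? =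
        descOut c (a ++ (y :: u' ++ x :: v)).head? := by
      cases a with
      | nil =>
        simp only [List.getLast?_nil, Option.none_or, descIn_some, decide_eq_true_eq] at ha
        simp [ha, hy.trans ha]
      | cons d a => rfl
    refine ⟨(c, descIn p c, descOut c (a ++ x :: (y :: u' ++ v)).head?) :: A, B, ?_, ?_⟩
    · rw [List.cons_append, shapes_cons, h₁]
      rfl
    · rw [List.cons_append, shapes_cons, hc]
      exact h₂.cons _

variable {x : α} {w w' : List α}

lemma IsHop.exists_shapes (h : IsHop x w w') :
    ∃ A B, shapes none w = A ++ (x, true, true) :: B ∧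
      (shapes none w').Perm (A ++ (x, false, false) :: B) := by
  obtain ⟨a, u, v, rfl, rfl, hu, hux, hv, ha⟩ := h
  exact exists_shapes_eq_and_perm hu hux hv a (by rwa [Option.or_none])

lemma IsHop.perm (h : IsHop x w w') : w'.Perm w := by
  obtain ⟨a, u, v, rfl, rfl, -⟩ := h
  exact List.perm_middle.append_left a

lemma IsHop.des_eq (h : IsHop x w w') : des w = des w' + 1 := by
  obtain ⟨A, B, h₁, h₂⟩ := h.exists_shapes
  simp [des, h₁, h₂.countP_eq]
  omega

lemma IsHop.mem_doubleDescents (h : IsHop x w w') : x ∈ doubleDescents w := by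
  obtain ⟨A, B, h₁, -⟩ := h.exists_shapes
  simp [h₁]

lemma IsHop.mem_shapes_iff (h : IsHop x w w') (hw : w.Nodup) {y : α} {s : Bool × Bool} :
    (y, s) ∈ shapes none w' ↔ y ≠ x ∧ (y, s) ∈ shapes none w ∨ y = x ∧ s = (false, false) := by
  obtain ⟨A, B, h₁, h₂⟩ := h.exists_shapes
  have hx : x ∉ A.map Prod.fst ++ B.map Prod.fst := by
    rw [← map_fst_shapes none w, h₁, List.map_append, List.map_cons] at hw
    exact (List.nodup_cons.mp (List.nodup_middle.mp hw)).1
  have hA : ∀ s, (x, s) ∉ A := fun s hs => hx (List.mem_append_left _ (List.mem_map_of_mem hs))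
  have hB : ∀ s, (x, s) ∉ B := fun s hs => hx (List.mem_append_right _ (List.mem_map_of_mem hs))
  rw [h₂.mem_iff, h₁]
  by_cases hy : y = x
  · subst hy; simp [hA, hB]
  · simp [hy]

lemma IsHop.doubleDescents_eq (h : IsHop x w w') (hw : w.Nodup) :
    doubleDescents w' = (doubleDescents w).erase x := by
  ext y
  simp [h.mem_shapes_iff hw, and_comm]

lemma IsHop.doubleAscents_eq (h : IsHop x w w') (hw : w.Nodup) :
    doubleAscents w' = insert x (doubleAscents w) := by
  ext y
  by_cases hy : y = x <;> simp [h.mem_shapes_iff hw, hy]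

def hopRight (x : α) (w : List α) : List α :=
  let b := (w.dropWhile (· ≠ x)).tail
  w.takeWhile (· ≠ x) ++ (b.takeWhile (· < x) ++ x :: b.dropWhile (· < x))

def hopLeft (x : α) (w : List α) : List α := (hopRight x w.reverse).reverse

lemma hopRight_eq {a u v : List α} (ha : x ∉ a) (hu : ∀ y ∈ u, y < x)
    (hv : descOut x v.head? = false) : hopRight x (a ++ x :: (u ++ v)) = a ++ (u ++ x :: v) := by
  have ha' : ∀ y ∈ a, decide (y ≠ x) = true := fun y hy => by
    simpa using ne_of_mem_of_not_mem hy ha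
  have hu' : ∀ y ∈ u, decide (y < x) = true := fun y hy => by simpa using hu y hy
  have hv' : v.takeWhile (· < x) = [] ∧ v.dropWhile (· < x) = v := by
    cases v with
    | nil => simp
    | cons z v => simp_all
  dsimp only [hopRight]
  rw [List.takeWhile_append_of_pos ha', List.dropWhile_append_of_pos ha']
  simp [List.takeWhile_append_of_pos hu', List.dropWhile_append_of_pos hu', hv']

lemma hopLeft_eq {a u v : List α} (hv : x ∉ v) (hu : ∀ y ∈ u, y < x)
    (ha : descOut x a.getLast? = false) : hopLeft x (a ++ (u ++ x :: v)) = a ++ x :: (u ++ v) := by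
  have := hopRight_eq (x := x) (a := v.reverse) (u := u.reverse) (v := a.reverse)
    (by simpa using hv) (by simpa using hu) (by rwa [List.head?_reverse])
  simp_all [hopLeft]

lemma IsHop.hopRight_eq (h : IsHop x w w') (hw : w.Nodup) : hopRight x w = w' := by
  obtain ⟨a, u, v, rfl, rfl, -, hux, hv, -⟩ := h
  exact ValleyHopping.hopRight_eq
    (fun hx => (List.nodup_middle.mp hw).notMem (List.mem_append_left _ hx)) hux hv

lemma IsHop.hopLeft_eq (h : IsHop x w w') (hw : w.Nodup) : hopLeft x w' = w := by
  obtain ⟨a, u, v, rfl, rfl, -, hux, -, ha⟩ := h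
  exact ValleyHopping.hopLeft_eq
    (fun hx => (List.nodup_middle.mp hw).notMem (by simp [hx])) hux
    (descOut_eq_false_of_descIn ha)

lemma isHop_hopRight (hw : w.Nodup) (hx : x ∈ doubleDescents w) : IsHop x w (hopRight x w) := by
  obtain ⟨a, b, rfl, hs⟩ := exists_of_mem_shapes (mem_lettersOfShape.mp hx)
  simp only [Option.or_none, Prod.mk.injEq] at hs
  obtain ⟨ha, hb⟩ := hs
  have hu : b.takeWhile (· < x) ≠ [] := by
    cases b with
    | nil => simp at hb
    | cons z b => simp_all
  have hux : ∀ y ∈ b.takeWhile (· < x), y < x := fun y hy => by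
    simpa using List.mem_takeWhile_imp hy
  rw [← List.takeWhile_append_dropWhile (p := (· < x)) (l := b)]
  refine ⟨a, _, _, rfl, hopRight_eq ?_ hux (descOut_head?_dropWhile x b), hu, hux,
    descOut_head?_dropWhile x b, ha.symm⟩
  exact fun hx => (List.nodup_middle.mp hw).notMem (List.mem_append_left _ hx)

lemma isHop_hopLeft (hw : w.Nodup) (hx : x ∈ doubleAscents w) : IsHop x (hopLeft x w) w := by
  obtain ⟨A, b, rfl, hs⟩ := exists_of_mem_shapes (mem_lettersOfShape.mp hx)
  simp only [Option.or_none, Prod.mk.injEq] at hs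
  obtain ⟨hA, hb⟩ := hs
  have hxAb : x ∉ A ++ b := (List.nodup_middle.mp hw).notMem
  have hxA : x ∉ A := fun h => hxAb (List.mem_append_left _ h)
  set u := (A.reverse.takeWhile (· < x)).reverse
  set a := (A.reverse.dropWhile (· < x)).reverse
  have hAau : A = a ++ u := by
    rw [← List.reverse_append, List.takeWhile_append_dropWhile, List.reverse_reverse]
  have hux : ∀ y ∈ u, y < x := fun y hy => by
    simpa using List.mem_takeWhile_imp (List.mem_reverse.mp hy)
  have hu : u ≠ [] := by
    have hlast := descOut_of_descIn_eq_false hA.symm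
      (fun h => hxA (List.mem_of_mem_getLast? h))
    rw [← List.head?_reverse] at hlast
    cases hr : A.reverse with
    | nil => simp [hr] at hlast
    | cons z r =>
      rw [hr] at hlast
      have hz : z < x := by simpa using hlast
      simp [u, hr, hz]
  have ha : descOut x a.getLast? = false := by
    simpa [a] using descOut_head?_dropWhile x A.reverse
  have hxa : x ∉ a.getLast? := fun h =>
    hxA (hAau ▸ List.mem_append_left _ (List.mem_of_mem_getLast? h))
  rw [hAau, List.append_assoc]
  exact ⟨a, u, b, hopLeft_eq (fun h => hxAb (List.mem_append_right _ h)) hux ha, rfl, hu,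
    hux, hb.symm, descIn_of_descOut_eq_false ha hxa⟩

def permutationsHopSystem {l : List α} (hl : l.Nodup) : HopSystem α (List α) where
  objs := l.permutations.toFinset
  des := des
  dd := doubleDescents
  da := doubleAscents
  hop := hopRight
  unhop := hopLeft
  hop_spec x w hw hx := by
    rw [List.mem_toFinset, List.mem_permutations] at hw ⊢
    have hnd : w.Nodup := hw.nodup_iff.mpr hl
    have h := isHop_hopRight hnd hx
    exact ⟨h.perm.trans hw, h.hopLeft_eq hnd, h.des_eq, h.doubleDescents_eq hnd,
      h.doubleAscents_eq hnd⟩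
  unhop_spec x w hw hx := by
    rw [List.mem_toFinset, List.mem_permutations] at hw ⊢
    have h := isHop_hopLeft (hw.nodup_iff.mpr hl) hx
    exact ⟨h.perm.symm.trans hw, h.hopRight_eq (h.perm.nodup_iff.mp (hw.nodup_iff.mpr hl)),
      h.mem_doubleDescents⟩

theorem sum_permutations_pow_des {R : Type*} [CommSemiring R] {l : List α} (hl : l.Nodup)
    (t : R) :
    ∑ w ∈ l.permutations.toFinset, t ^ des w =
      ∑ w ∈ l.permutations.toFinset with doubleDescents w = ∅,
        t ^ des w * (1 + t) ^ (l.length - 1 - 2 * des w) := by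
  have hperm {w : List α} (hw : w ∈ l.permutations.toFinset) : w.Perm l := by
    simpa [List.mem_permutations] using hw
  have hsub {w : List α} (hw : w ∈ l.permutations.toFinset) (s : Bool × Bool) :
      lettersOfShape s w ⊆ l.toFinset := by
    simpa [List.toFinset_eq_of_perm _ _ (hperm hw)] using lettersOfShape_subset s w
  refine ((permutationsHopSystem hl).sum_pow_des_eq t l.toFinset).trans
    (Finset.sum_congr (Finset.filter_congr fun w hw => ?_) fun w hw => ?_)
  · change Disjoint (doubleDescents w) l.toFinset ↔ _
    rw [Finset.disjoint_iff_inter_eq_empty, Finset.inter_eq_left.mpr (hsub hw _)]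
  · obtain ⟨hw, hdd⟩ := Finset.mem_filter.mp hw
    have key := two_mul_des_add_card_doubleAscents ((hperm hw).nodup_iff.mpr hl) hdd
    rw [(hperm hw).length_eq] at key
    change t ^ des w * (1 + t) ^ #(doubleAscents w ∩ l.toFinset) = _
    rw [Finset.inter_eq_left.mpr (hsub hw _),
      show #(doubleAscents w) = l.length - 1 - 2 * des w by omega]

/-! ### Permutations of `Fin n` -/

lemma shapes_ofFn {n : ℕ} (f : Fin n → α) (p : Option α) :
    shapes p (List.ofFn f) = List.ofFn fun i => (f i,
      descIn (if (i : ℕ) = 0 then p else some (f ⟨i - 1, by omega⟩)) (f i),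
      descOut (f i) (if h : (i : ℕ) + 1 < n then some (f ⟨i + 1, h⟩) else none)) := by
  induction n generalizing p with
  | zero => simp
  | succ n ih =>
    rw [List.ofFn_succ, shapes_cons, ih, List.ofFn_succ]
    congr 1
    · cases n <;> simp [List.ofFn_succ]
    · congr 1
      funext ⟨i, hi⟩
      rcases i with _ | i
      · simp [Fin.succ, Nat.lt_iff_add_one_le]
      · simp [Fin.succ]

variable {n : ℕ}

lemma descIn_ofFn_iff (f : Fin n → α) (i : Fin n) :
    descIn (if (i : ℕ) = 0 then none else some (f ⟨i - 1, by omega⟩)) (f i) = true ↔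
      (i : ℕ) = 0 ∨ ∃ h : (i : ℕ) - 1 < n, f i < f ⟨i - 1, h⟩ := by
  by_cases h : (i : ℕ) = 0 <;> simp [h, i.isLt.trans_le' (Nat.sub_le _ _)]

lemma descOut_ofFn_iff (f : Fin n → α) (i : Fin n) :
    descOut (f i) (if h : (i : ℕ) + 1 < n then some (f ⟨i + 1, h⟩) else none) = true ↔
      ∃ h : (i : ℕ) + 1 < n, f ⟨i + 1, h⟩ < f i := by
  by_cases h : (i : ℕ) + 1 < n <;> simp [h]

lemma des_ofFn (π : Equiv.Perm (Fin n)) : des (List.ofFn π) = desNum π := by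
  rw [des, shapes_ofFn, List.ofFn_eq_map, List.countP_map, desNum, ← List.toFinset_finRange,
    (List.nodup_finRange n).card_eq_countP]
  exact List.countP_congr fun i _ => by simp [descOut_ofFn_iff]

lemma doubleDescents_ofFn_eq_empty_iff (π : Equiv.Perm (Fin n)) :
    doubleDescents (List.ofFn π) = ∅ ↔ ddNum π = 0 := by
  rw [ddNum, Finset.card_eq_zero, Finset.filter_eq_empty_iff, Finset.eq_empty_iff_forall_notMem]
  simp [shapes_ofFn, descIn_ofFn_iff, descOut_ofFn_iff, forall_comm (α := Fin n)]

lemma sum_ofFn_perm_eq_sum_permutations {M : Type*} [AddCommMonoid M] (F : List (Fin n) → M) :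
    ∑ π : Equiv.Perm (Fin n), F (List.ofFn π) =
      ∑ w ∈ (List.finRange n).permutations.toFinset, F w := by
  have hinj : Function.Injective fun π : Equiv.Perm (Fin n) => List.ofFn π :=
    fun _ _ h => Equiv.coe_fn_injective (List.ofFn_injective h)
  have himage : Finset.univ.image (fun π : Equiv.Perm (Fin n) => List.ofFn π) =
      (List.finRange n).permutations.toFinset := by
    refine Finset.eq_of_subset_of_card_le (fun w hw => ?_) ?_
    · obtain ⟨π, -, rfl⟩ := Finset.mem_image.mp hw
      simpa [List.mem_permutations, List.ofFn_eq_map] using π.map_finRange_perm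
    · rw [Finset.card_image_of_injective _ hinj, List.toFinset_card_of_nodup
        (List.nodup_permutations _ (List.nodup_finRange n)), List.length_permutations,
        List.length_finRange, Finset.card_univ, Fintype.card_perm, Fintype.card_fin]
  rw [← himage, Finset.sum_image fun _ _ _ _ h => hinj h]

theorem sum_pow_desNum {R : Type*} [CommSemiring R] (t : R) :
    ∑ π : Equiv.Perm (Fin n), t ^ desNum π =
      ∑ π : Equiv.Perm (Fin n) with ddNum π = 0,
        t ^ desNum π * (1 + t) ^ (n - 1 - 2 * desNum π) := by
  have h := sum_permutations_pow_des (List.nodup_finRange n) t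
  rw [Finset.sum_filter, ← sum_ofFn_perm_eq_sum_permutations,
    ← sum_ofFn_perm_eq_sum_permutations] at h
  rw [Finset.sum_filter]
  simpa [des_ofFn, doubleDescents_ofFn_eq_empty_iff] using h

lemma two_mul_desNum_le {π : Equiv.Perm (Fin n)} (h : ddNum π = 0) : 2 * desNum π ≤ n - 1 := by
  have := two_mul_des_add_card_doubleAscents (List.nodup_ofFn.mpr π.injective)
    ((doubleDescents_ofFn_eq_empty_iff π).mpr h)
  rw [des_ofFn, List.length_ofFn] at this
  omega

end ValleyHopping

theorem eulerian_gamma_expansion_general (n : ℕ) :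
    (∑ π : Equiv.Perm (Fin n), (X : Polynomial ℤ) ^ desNum π) =
      ∑ k ∈ Finset.range ((n - 1) / 2 + 1),
        C ((Finset.univ.filter (fun π : Equiv.Perm (Fin n) =>
              ddNum π = 0 ∧ desNum π = k)).card : ℤ) *
          X ^ k * (1 + X) ^ (n - 1 - 2 * k) := by
  rw [ValleyHopping.sum_pow_desNum, ← Finset.sum_fiberwise_of_maps_to (g := desNum)
    (t := Finset.range ((n - 1) / 2 + 1)) fun π hπ => Finset.mem_range.mpr (by
      have := ValleyHopping.two_mul_desNum_le (Finset.mem_filter.mp hπ).2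
      omega)]
  refine Finset.sum_congr rfl fun k _ => ?_
  rw [Finset.filter_filter, Finset.sum_congr rfl fun π hπ => by rw [(Finset.mem_filter.mp hπ).2.2],
    Finset.sum_const, nsmul_eq_mul, map_natCast, mul_assoc]

/-- Foata–Schützenberger: the Eulerian polynomial has the gamma-expansion
`A_n(t) = ∑_{k=0}^{⌊(n-1)/2⌋} γ_{n,k} t^k (1+t)^{n-1-2k}` where `γ_{n,k}` counts
permutations with no double descents and `k` descents. -/
theorem eulerian_gamma_expansion (n : ℕ) (hn : 1 ≤ n) :
    (∑ π : Equiv.Perm (Fin n), (X : Polynomial ℤ) ^ desNum π) =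
      ∑ k ∈ Finset.range ((n - 1) / 2 + 1),
        C ((Finset.univ.filter (fun π : Equiv.Perm (Fin n) =>
              ddNum π = 0 ∧ desNum π = k)).card : ℤ) *
          X ^ k * (1 + X) ^ (n - 1 - 2 * k) :=
  eulerian_gamma_expansion_general n
end
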